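/- arXiv:2305.10015 — 6 statements merged into one kernel-verified Lean document; each statement's English description precedes it below -/
import Mathlib

section
/- Utility bound for regression (Theorem 1). Let F be a set of measurable functions from 𝒳 to ℝ, let f̂, f̃ ∈ F, let f* ∈ F be a minimizer of R_s over F, and let f̃* ∈ F be a minimizer of R̃_s over F. Assume Φ_s(μ̂), Φ_s(f̂), Φ_s(f̃), Φ_s(f*), Φ_s(f̃*), Φ̃_s(f̃), Φ̃_s(f*), Φ̃_s(f̃*) are all finite, and let M be a constant with sup_{x∈𝒳}|μ̂(x)| ≤ M, sup_{x∈𝒳}|f̃(x)| ≤ M, sup_{x∈𝒳}|f̃*(x)| ≤ M and sup_{x∈𝒳}|f*(x)| ≤ M. Then |R_s(f̃) − R_s(f̂)| ≤ |R_s(f̂) − R_s(f*)| + |R̃_s(f̃) − R̃_s(f̃*)| + 2·M·Υ₁·√(χ²(P_X ‖ P_X̃)) + 2·Υ₂·√(Φ_s(μ̂)) + 4·Φ_s(μ̂), where Υ₁ = √(Φ̃_s(f̃)) + 2√(Φ̃_s(f̃*)) + √(Φ̃_s(f*)) and Υ₂ = √(Φ_s(f̃)) + 2√(Φ_s(f̃*))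 + √(Φ_s(f*)). -/
/-!
Since `f*` minimises `R_s` over `F`,
`|R_s(f̃) - R_s(f̂)| ≤ |R_s(f̂) - R_s(f*)| + Φ_s(f̃) - Φ_s(f*)`, and since `f̃*` minimises `R̃_s`,
`Φ̃_s(f̃) - Φ̃_s(f*) ≤ |R̃_s(f̃) - R̃_s(f̃*)|`. It remains to compare `Φ_s(f)` with `Φ̃_s(f)` for
`f = f̃, f*`, in two moves, each paid for by Cauchy–Schwarz:
re-centring the square loss from `μ` to `μ̂` under `p_X` costs `2 √Φ_s(f) √Φ_s(μ̂) + Φ_s(μ̂)`,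
and changing the density from `p_X` to `p_X̃`, through
`∫ g (p_X - p_X̃) = ∫ g (p_X / p_X̃ - 1) p_X̃`, costs `2 M √Φ̃_s(f) √χ²`.
-/

open MeasureTheory

section

variable {α : Type*} [MeasurableSpace α] {ν : Measure α}

theorem abs_integral_mul_le_sqrt_mul_sqrt {f g : α → ℝ} (hf : MemLp f 2 ν) (hg : MemLp g 2 ν) :
    |∫ x, f x * g x ∂ν| ≤ √(∫ x, f x ^ 2 ∂ν) * √(∫ x, g x ^ 2 ∂ν) := by
  have hholder := integral_mul_norm_le_Lp_mul_Lq Real.HolderConjugate.two_two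
    (by simpa using hf) (by simpa using hg)
  calc |∫ x, f x * g x ∂ν| ≤ ∫ x, ‖f x‖ * ‖g x‖ ∂ν := by
        simpa only [Real.norm_eq_abs, abs_mul] using
          abs_integral_le_integral_abs (μ := ν) (f := fun x => f x * g x)
    _ ≤ _ := hholder
    _ = _ := by simp [Real.sqrt_eq_rpow, Real.norm_eq_abs, sq_abs]

variable {u v w : α → ℝ}

theorem memLp_two_mul_sqrt (hu : AEStronglyMeasurable u ν) (hw : AEStronglyMeasurable w ν)
    (hw0 : 0 ≤ᵐ[ν] w) (hu2 : Integrable (fun x => u x ^ 2 * w x) ν) :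
    MemLp (fun x => u x * √(w x)) 2 ν := by
  refine (memLp_two_iff_integrable_sq (by fun_prop)).2 (hu2.congr ?_)
  filter_upwards [hw0] with x hx
  rw [mul_pow, Real.sq_sqrt hx]

theorem integrable_mul_mul_of_integrable_sq_mul (hu : AEStronglyMeasurable u ν)
    (hv : AEStronglyMeasurable v ν) (hw : AEStronglyMeasurable w ν) (hw0 : 0 ≤ᵐ[ν] w)
    (hu2 : Integrable (fun x => u x ^ 2 * w x) ν) (hv2 : Integrable (fun x => v x ^ 2 * w x) ν) :
    Integrable (fun x => u x * v x * w x) ν := by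
  refine ((memLp_two_mul_sqrt hu hw hw0 hu2).integrable_mul
    (memLp_two_mul_sqrt hv hw hw0 hv2)).congr ?_
  filter_upwards [hw0] with x hx
  simp only [Pi.mul_apply]
  rw [mul_mul_mul_comm, Real.mul_self_sqrt hx, mul_assoc]

theorem abs_integral_mul_mul_le_sqrt_mul_sqrt (hu : AEStronglyMeasurable u ν)
    (hv : AEStronglyMeasurable v ν) (hw : AEStronglyMeasurable w ν) (hw0 : 0 ≤ᵐ[ν] w)
    (hu2 : Integrable (fun x => u x ^ 2 * w x) ν) (hv2 : Integrable (fun x => v x ^ 2 * w x) ν) :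
    |∫ x, u x * v x * w x ∂ν| ≤ √(∫ x, u x ^ 2 * w x ∂ν) * √(∫ x, v x ^ 2 * w x ∂ν) := by
  have hcs := abs_integral_mul_le_sqrt_mul_sqrt (memLp_two_mul_sqrt hu hw hw0 hu2)
    (memLp_two_mul_sqrt hv hw hw0 hv2)
  have huv : ∫ x, u x * √(w x) * (v x * √(w x)) ∂ν = ∫ x, u x * v x * w x ∂ν := by
    refine integral_congr_ae (hw0.mono fun x hx => ?_)
    dsimp only
    rw [mul_mul_mul_comm, Real.mul_self_sqrt hx]
  have hsq : ∀ g : α → ℝ, ∫ x, (g x * √(w x)) ^ 2 ∂ν = ∫ x, g x ^ 2 * w x ∂ν := fun g =>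
    integral_congr_ae (hw0.mono fun x hx => by dsimp only; rw [mul_pow, Real.sq_sqrt hx])
  rwa [huv, hsq, hsq] at hcs

variable {f a b : α → ℝ}

theorem integrable_sub_sq_mul (hf : AEStronglyMeasurable f ν) (ha : AEStronglyMeasurable a ν)
    (hb : AEStronglyMeasurable b ν) (hw : AEStronglyMeasurable w ν) (hw0 : 0 ≤ᵐ[ν] w)
    (hfa : Integrable (fun x => (f x - a x) ^ 2 * w x) ν)
    (hba : Integrable (fun x => (b x - a x) ^ 2 * w x) ν) :
    Integrable (fun x => (f x - b x) ^ 2 * w x) ν := by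
  have hcross := integrable_mul_mul_of_integrable_sq_mul (u := fun x => f x - a x)
    (v := fun x => b x - a x) (hf.sub ha) (hb.sub ha) hw hw0 hfa hba
  refine ((hfa.sub (hcross.const_mul (2 : ℝ))).add hba).congr (ae_of_all _ fun x => ?_)
  simp only [Pi.add_apply, Pi.sub_apply]
  ring

theorem abs_integral_sub_sq_mul_sub_le (hf : AEStronglyMeasurable f ν)
    (ha : AEStronglyMeasurable a ν) (hb : AEStronglyMeasurable b ν)
    (hw : AEStronglyMeasurable w ν) (hw0 : 0 ≤ᵐ[ν] w)
    (hfa : Integrable (fun x => (f x - a x) ^ 2 * w x) ν)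
    (hba : Integrable (fun x => (b x - a x) ^ 2 * w x) ν) :
    |∫ x, (f x - a x) ^ 2 * w x ∂ν - ∫ x, (f x - b x) ^ 2 * w x ∂ν|
      ≤ 2 * √(∫ x, (f x - a x) ^ 2 * w x ∂ν) * √(∫ x, (b x - a x) ^ 2 * w x ∂ν)
        + ∫ x, (b x - a x) ^ 2 * w x ∂ν := by
  have hcross := integrable_mul_mul_of_integrable_sq_mul (u := fun x => f x - a x)
    (v := fun x => b x - a x) (hf.sub ha) (hb.sub ha) hw hw0 hfa hba
  have hcs := abs_le.mp <|
    abs_integral_mul_mul_le_sqrt_mul_sqrt (u := fun x => f x - a x)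
      (v := fun x => b x - a x) (hf.sub ha) (hb.sub ha) hw hw0 hfa hba
  have hdiff : ∫ x, (f x - a x) ^ 2 * w x ∂ν - ∫ x, (f x - b x) ^ 2 * w x ∂ν
      = 2 * ∫ x, (f x - a x) * (b x - a x) * w x ∂ν - ∫ x, (b x - a x) ^ 2 * w x ∂ν := by
    rw [← integral_sub hfa (integrable_sub_sq_mul hf ha hb hw hw0 hfa hba),
      ← integral_const_mul, ← integral_sub (hcross.const_mul (2 : ℝ)) hba]
    congr 1 with x
    ring
  have hV : 0 ≤ ∫ x, (b x - a x) ^ 2 * w x ∂ν :=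
    integral_nonneg_of_ae (hw0.mono fun x hx => mul_nonneg (sq_nonneg _) hx)
  rw [hdiff, abs_le]
  constructor <;> linarith [hcs.1, hcs.2]

theorem abs_integral_mul_sub_integral_mul_le_sqrt_chiSq {h p q : α → ℝ}
    (hh : AEStronglyMeasurable h ν) (hp : AEStronglyMeasurable p ν)
    (hq : AEStronglyMeasurable q ν) (hq0 : 0 ≤ᵐ[ν] q) (hpq : ∀ᵐ x ∂ν, q x = 0 → p x = 0)
    (hhp : Integrable (fun x => h x * p x) ν) (hhq : Integrable (fun x => h x * q x) ν)
    (hh2 : Integrable (fun x => h x ^ 2 * q x) ν)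
    (hchi : Integrable (fun x => q x * (p x / q x - 1) ^ 2) ν) :
    |∫ x, h x * p x ∂ν - ∫ x, h x * q x ∂ν|
      ≤ √(∫ x, h x ^ 2 * q x ∂ν) * √(∫ x, q x * (p x / q x - 1) ^ 2 ∂ν) := by
  have hcs := abs_integral_mul_mul_le_sqrt_mul_sqrt hh
    (v := fun x => p x / q x - 1)
    ((hp.aemeasurable.div hq.aemeasurable).sub_const 1).aestronglyMeasurable hq hq0 hh2
    (hchi.congr (ae_of_all _ fun x => mul_comm _ _))
  rw [← integral_sub hhp hhq]
  convert hcs using 2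
  · refine integral_congr_ae ?_
    filter_upwards [hpq] with x hx
    by_cases hqx : q x = 0
    · simp [hqx, hx hqx]
    · field_simp
  · simp only [mul_comm]

theorem abs_integral_sq_mul_sub_integral_sq_mul_le {g p q : α → ℝ} {K : ℝ}
    (hg : AEStronglyMeasurable g ν) (hp : AEStronglyMeasurable p ν)
    (hq : AEStronglyMeasurable q ν) (hq0 : 0 ≤ᵐ[ν] q) (hpq : ∀ᵐ x ∂ν, q x = 0 → p x = 0)
    (hgK : ∀ᵐ x ∂ν, |g x| ≤ K)
    (hgp : Integrable (fun x => g x ^ 2 * p x) ν) (hgq : Integrable (fun x => g x ^ 2 * q x) ν)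
    (hchi : Integrable (fun x => q x * (p x / q x - 1) ^ 2) ν) :
    |∫ x, g x ^ 2 * p x ∂ν - ∫ x, g x ^ 2 * q x ∂ν|
      ≤ K * √(∫ x, g x ^ 2 * q x ∂ν) * √(∫ x, q x * (p x / q x - 1) ^ 2 ∂ν) := by
  rcases lt_or_ge K 0 with hK | hK
  · have hν : ν = 0 := ae_eq_bot.mp <| Filter.eventually_false_iff_eq_bot.mp <|
      hgK.mono fun x hx => (hx.trans_lt hK).not_ge (abs_nonneg _)
    simp [hν]
  have hle : ∀ᵐ x ∂ν, (g x ^ 2) ^ 2 * q x ≤ K ^ 2 * (g x ^ 2 * q x) := by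
    filter_upwards [hgK, hq0] with x hx hqx
    calc (g x ^ 2) ^ 2 * q x = g x ^ 2 * (g x ^ 2 * q x) := by ring
      _ ≤ K ^ 2 * (g x ^ 2 * q x) :=
        mul_le_mul_of_nonneg_right (sq_le_sq' (abs_le.mp hx).1 (abs_le.mp hx).2)
          (mul_nonneg (sq_nonneg _) hqx)
  have hg4 : Integrable (fun x => (g x ^ 2) ^ 2 * q x) ν := by
    refine (hgq.const_mul (K ^ 2)).mono' (by fun_prop) ?_
    filter_upwards [hle, hq0] with x hx hqx
    rwa [Real.norm_of_nonneg (mul_nonneg (sq_nonneg _) hqx)]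
  have hsqrt : √(∫ x, (g x ^ 2) ^ 2 * q x ∂ν) ≤ K * √(∫ x, g x ^ 2 * q x ∂ν) := by
    calc √(∫ x, (g x ^ 2) ^ 2 * q x ∂ν) ≤ √(K ^ 2 * ∫ x, g x ^ 2 * q x ∂ν) := by
          rw [← integral_const_mul]
          exact Real.sqrt_le_sqrt (integral_mono_ae hg4 (hgq.const_mul _) hle)
      _ = K * √(∫ x, g x ^ 2 * q x ∂ν) := by
          rw [Real.sqrt_mul (sq_nonneg K), Real.sqrt_sq hK]
  exact (abs_integral_mul_sub_integral_mul_le_sqrt_chiSq (h := fun x => g x ^ 2) (by fun_prop)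
    hp hq hq0 hpq hgp hgq hg4 hchi).trans
    (mul_le_mul_of_nonneg_right hsqrt (Real.sqrt_nonneg _))

theorem abs_integral_sub_sq_mul_sub_integral_sub_sq_mul_le {p q : α → ℝ} {K : ℝ}
    (hf : AEStronglyMeasurable f ν) (ha : AEStronglyMeasurable a ν)
    (hb : AEStronglyMeasurable b ν) (hp : AEStronglyMeasurable p ν)
    (hq : AEStronglyMeasurable q ν) (hp0 : 0 ≤ᵐ[ν] p) (hq0 : 0 ≤ᵐ[ν] q)
    (hpq : ∀ᵐ x ∂ν, q x = 0 → p x = 0) (hfbK : ∀ᵐ x ∂ν, |f x - b x| ≤ K)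
    (hfa : Integrable (fun x => (f x - a x) ^ 2 * p x) ν)
    (hba : Integrable (fun x => (b x - a x) ^ 2 * p x) ν)
    (hfb : Integrable (fun x => (f x - b x) ^ 2 * q x) ν)
    (hchi : Integrable (fun x => q x * (p x / q x - 1) ^ 2) ν) :
    |∫ x, (f x - a x) ^ 2 * p x ∂ν - ∫ x, (f x - b x) ^ 2 * q x ∂ν|
      ≤ 2 * √(∫ x, (f x - a x) ^ 2 * p x ∂ν) * √(∫ x, (b x - a x) ^ 2 * p x ∂ν)
        + ∫ x, (b x - a x) ^ 2 * p x ∂ν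
        + K * √(∫ x, (f x - b x) ^ 2 * q x ∂ν) * √(∫ x, q x * (p x / q x - 1) ^ 2 ∂ν) :=
  (abs_sub_le _ _ _).trans <| add_le_add (abs_integral_sub_sq_mul_sub_le hf ha hb hp hp0 hfa hba)
    (abs_integral_sq_mul_sub_integral_sq_mul_le (g := fun x => f x - b x) (hf.sub hb) hp hq hq0
      hpq hfbK (integrable_sub_sq_mul hf ha hb hp hp0 hfa hba) hfb hchi)

end

/-- The risks enter only through `R_s(f) = Φ_s(f) + σ²` and `R̃_s(f) = Φ̃_s(f) + σ̃²`, which is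
what `Y = μ(X) + ε` with `E[ε | X] = 0` gives. -/
theorem stmt0_general
    {p : ℕ} (𝒳 : Set (Fin p → ℝ)) (h𝒳 : MeasurableSet 𝒳)
    -- densities of the original and synthetic features
    (pX pXt : (Fin p → ℝ) → ℝ)
    (hpX_meas : Measurable pX) (hpXt_meas : Measurable pXt)
    (hpX_nonneg : ∀ x ∈ 𝒳, 0 ≤ pX x) (hpXt_nonneg : ∀ x ∈ 𝒳, 0 ≤ pXt x)
    (hpos : ∀ x ∈ 𝒳, 0 < pX x → 0 < pXt x)
    -- regression functions
    (μ μhat : (Fin p → ℝ) → ℝ)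
    (hμ : Measurable μ) (hμhat : Measurable μhat)
    -- noise variances
    (σ2 σt2 : ℝ)
    -- model class
    (F : Set ((Fin p → ℝ) → ℝ)) (hF : ∀ f ∈ F, Measurable f)
    -- risks and excess risks
    (Φs Φst Rs Rst : ((Fin p → ℝ) → ℝ) → ℝ)
    (hΦs : ∀ f, Φs f = ∫ x in 𝒳, (f x - μ x) ^ 2 * pX x)
    (hΦst : ∀ f, Φst f = ∫ x in 𝒳, (f x - μhat x) ^ 2 * pXt x)
    (hRs : ∀ f, Rs f = Φs f + σ2)
    (hRst : ∀ f, Rst f = Φst f + σt2)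
    -- estimated models and population minimizers
    (fhat ftil fstar ftstar : (Fin p → ℝ) → ℝ)
    (hfhatF : fhat ∈ F) (hftilF : ftil ∈ F) (hfstarF : fstar ∈ F)
    (hfstar_min : ∀ f ∈ F, Rs fstar ≤ Rs f)
    (hftstar_min : ∀ f ∈ F, Rst ftstar ≤ Rst f)
    -- finiteness of the relevant excess risks
    (hint1 : IntegrableOn (fun x => (μhat x - μ x) ^ 2 * pX x) 𝒳)
    (hint3 : IntegrableOn (fun x => (ftil x - μ x) ^ 2 * pX x) 𝒳)
    (hint4 : IntegrableOn (fun x => (fstar x - μ x) ^ 2 * pX x) 𝒳)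
    (hint6 : IntegrableOn (fun x => (ftil x - μhat x) ^ 2 * pXt x) 𝒳)
    (hint7 : IntegrableOn (fun x => (fstar x - μhat x) ^ 2 * pXt x) 𝒳)
    -- χ²-divergence between the feature distributions, assumed finite
    (chi2 : ℝ)
    (hchi2 : chi2 = ∫ x in 𝒳, pXt x * (pX x / pXt x - 1) ^ 2)
    (hchi2_int : IntegrableOn (fun x => pXt x * (pX x / pXt x - 1) ^ 2) 𝒳)
    -- the uniform bound M
    (M : ℝ)
    (hM1 : ∀ x ∈ 𝒳, |μhat x| ≤ M) (hM2 : ∀ x ∈ 𝒳, |ftil x| ≤ M)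
    (hM4 : ∀ x ∈ 𝒳, |fstar x| ≤ M) :
    |Rs ftil - Rs fhat| ≤
      |Rs fhat - Rs fstar| + |Rst ftil - Rst ftstar|
        + 2 * M * (Real.sqrt (Φst ftil) + 2 * Real.sqrt (Φst ftstar) + Real.sqrt (Φst fstar))
            * Real.sqrt chi2
        + 2 * (Real.sqrt (Φs ftil) + 2 * Real.sqrt (Φs ftstar) + Real.sqrt (Φs fstar))
            * Real.sqrt (Φs μhat)
        + 4 * Φs μhat := by
  have hmem : ∀ᵐ x ∂volume.restrict 𝒳, x ∈ 𝒳 := ae_restrict_mem h𝒳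
  have hpX0 : 0 ≤ᵐ[volume.restrict 𝒳] pX := hmem.mono hpX_nonneg
  have hpXt0 : 0 ≤ᵐ[volume.restrict 𝒳] pXt := hmem.mono hpXt_nonneg
  have hpq : ∀ᵐ x ∂volume.restrict 𝒳, pXt x = 0 → pX x = 0 := hmem.mono fun x hx h0 =>
    (hpX_nonneg x hx).eq_or_lt.elim Eq.symm fun hlt => absurd h0 (hpos x hx hlt).ne'
  have transfer : ∀ f ∈ F, (∀ x ∈ 𝒳, |f x| ≤ M) →
      IntegrableOn (fun x => (f x - μ x) ^ 2 * pX x) 𝒳 →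
      IntegrableOn (fun x => (f x - μhat x) ^ 2 * pXt x) 𝒳 →
      |Φs f - Φst f| ≤ 2 * √(Φs f) * √(Φs μhat) + Φs μhat + 2 * M * √(Φst f) * √chi2 := by
    intro f hf hfM hfμ hfμhat
    rw [hΦs, hΦs, hΦst, hchi2]
    exact abs_integral_sub_sq_mul_sub_integral_sub_sq_mul_le (hF f hf).aestronglyMeasurable
      hμ.aestronglyMeasurable hμhat.aestronglyMeasurable hpX_meas.aestronglyMeasurable
      hpXt_meas.aestronglyMeasurable hpX0 hpXt0 hpq
      (hmem.mono fun x hx => (abs_sub _ _).trans (by linarith [hfM x hx, hM1 x hx]))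
      hfμ hint1 hfμhat hchi2_int
  have htil := abs_le.mp (transfer ftil hftilF hM2 hint3 hint6)
  have hstar := abs_le.mp (transfer fstar hfstarF hM4 hint4 hint7)
  have hMchi : 0 ≤ M * √chi2 := by
    rcases 𝒳.eq_empty_or_nonempty with rfl | ⟨x, hx⟩
    · simp [hchi2]
    · exact mul_nonneg ((abs_nonneg _).trans (hM1 x hx)) (Real.sqrt_nonneg _)
  have hP : 0 ≤ Φs μhat := by
    rw [hΦs]
    exact integral_nonneg_of_ae (hpX0.mono fun x hx => mul_nonneg (sq_nonneg _) hx)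
  have hgap : Φst ftil - Φst ftstar ≤ |Rst ftil - Rst ftstar| := by
    simpa only [hRst, add_sub_add_right_eq_sub] using le_abs_self (Rst ftil - Rst ftstar)
  have hmin_tstar := hftstar_min fstar hfstarF
  simp only [hRst] at hmin_tstar
  simp only [hRs, add_le_add_iff_right, add_sub_add_right_eq_sub] at hfstar_min ⊢
  rw [abs_of_nonneg (sub_nonneg.mpr (hfstar_min fhat hfhatF)), abs_le]
  constructor <;> linarith [hfstar_min ftil hftilF, hfstar_min fhat hfhatF,
    mul_nonneg hMchi (Real.sqrt_nonneg (Φst ftstar)),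
    mul_nonneg (Real.sqrt_nonneg (Φs ftstar)) (Real.sqrt_nonneg (Φs μhat))]

/-- **Utility bound for regression (Theorem 1).**
`𝒳 ⊆ ℝ^p` is measurable, `pX`, `pXt` are the densities of the original and synthetic
features, `μ`, `μhat` the original and synthetic regression functions, and the risks
satisfy `R_s(f) = Φ_s(f) + σ²`, `R̃_s(f) = Φ̃_s(f) + σ̃²` (which follows from the
data-generating mechanism `Y = μ(X) + ε`, `E[ε|X] = 0`, `E[ε²] = σ²`, and similarly for
the synthetic data).  `fhat`, `ftil` are the models estimated from the original and
synthetic data, `fstar` minimizes `R_s` over `F`, and `ftstar` minimizes `R̃_s` over `F`. -/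
theorem stmt0
    {p : ℕ} (𝒳 : Set (Fin p → ℝ)) (h𝒳 : MeasurableSet 𝒳)
    -- densities of the original and synthetic features
    (pX pXt : (Fin p → ℝ) → ℝ)
    (hpX_meas : Measurable pX) (hpXt_meas : Measurable pXt)
    (hpX_nonneg : ∀ x ∈ 𝒳, 0 ≤ pX x) (hpXt_nonneg : ∀ x ∈ 𝒳, 0 ≤ pXt x)
    (hpX_int : IntegrableOn pX 𝒳) (hpXt_int : IntegrableOn pXt 𝒳)
    (hpX_one : (∫ x in 𝒳, pX x) = 1) (hpXt_one : (∫ x in 𝒳, pXt x) = 1)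
    (hpos : ∀ x ∈ 𝒳, 0 < pX x → 0 < pXt x)
    -- regression functions
    (μ μhat : (Fin p → ℝ) → ℝ)
    (hμ : Measurable μ) (hμhat : Measurable μhat)
    -- noise variances
    (σ2 σt2 : ℝ)
    -- model class
    (F : Set ((Fin p → ℝ) → ℝ)) (hF : ∀ f ∈ F, Measurable f)
    -- risks and excess risks
    (Φs Φst Rs Rst : ((Fin p → ℝ) → ℝ) → ℝ)
    (hΦs : ∀ f, Φs f = ∫ x in 𝒳, (f x - μ x) ^ 2 * pX x)
    (hΦst : ∀ f, Φst f = ∫ x in 𝒳, (f x - μhat x) ^ 2 * pXt x)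
    (hRs : ∀ f, Rs f = Φs f + σ2)
    (hRst : ∀ f, Rst f = Φst f + σt2)
    -- estimated models and population minimizers
    (fhat ftil fstar ftstar : (Fin p → ℝ) → ℝ)
    (hfhatF : fhat ∈ F) (hftilF : ftil ∈ F) (hfstarF : fstar ∈ F) (hftstarF : ftstar ∈ F)
    (hfstar_min : ∀ f ∈ F, Rs fstar ≤ Rs f)
    (hftstar_min : ∀ f ∈ F, Rst ftstar ≤ Rst f)
    -- finiteness of the relevant excess risks
    (hint1 : IntegrableOn (fun x => (μhat x - μ x) ^ 2 * pX x) 𝒳)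
    (hint2 : IntegrableOn (fun x => (fhat x - μ x) ^ 2 * pX x) 𝒳)
    (hint3 : IntegrableOn (fun x => (ftil x - μ x) ^ 2 * pX x) 𝒳)
    (hint4 : IntegrableOn (fun x => (fstar x - μ x) ^ 2 * pX x) 𝒳)
    (hint5 : IntegrableOn (fun x => (ftstar x - μ x) ^ 2 * pX x) 𝒳)
    (hint6 : IntegrableOn (fun x => (ftil x - μhat x) ^ 2 * pXt x) 𝒳)
    (hint7 : IntegrableOn (fun x => (fstar x - μhat x) ^ 2 * pXt x) 𝒳)
    (hint8 : IntegrableOn (fun x => (ftstar x - μhat x) ^ 2 * pXt x) 𝒳)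
    -- χ²-divergence between the feature distributions, assumed finite
    (chi2 : ℝ)
    (hchi2 : chi2 = ∫ x in 𝒳, pXt x * (pX x / pXt x - 1) ^ 2)
    (hchi2_int : IntegrableOn (fun x => pXt x * (pX x / pXt x - 1) ^ 2) 𝒳)
    -- the uniform bound M
    (M : ℝ)
    (hM1 : ∀ x ∈ 𝒳, |μhat x| ≤ M) (hM2 : ∀ x ∈ 𝒳, |ftil x| ≤ M)
    (hM3 : ∀ x ∈ 𝒳, |ftstar x| ≤ M) (hM4 : ∀ x ∈ 𝒳, |fstar x| ≤ M) :
    |Rs ftil - Rs fhat| ≤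
      |Rs fhat - Rs fstar| + |Rst ftil - Rst ftstar|
        + 2 * M * (Real.sqrt (Φst ftil) + 2 * Real.sqrt (Φst ftstar) + Real.sqrt (Φst fstar))
            * Real.sqrt chi2
        + 2 * (Real.sqrt (Φs ftil) + 2 * Real.sqrt (Φs ftstar) + Real.sqrt (Φs fstar))
            * Real.sqrt (Φs μhat)
        + 4 * Φs μhat :=
  stmt0_general 𝒳 h𝒳 pX pXt hpX_meas hpXt_meas hpX_nonneg hpXt_nonneg hpos μ μhat hμ hμhat σ2 σt2 F
    hF Φs Φst Rs Rst hΦs hΦst hRs hRst fhat ftil fstar ftstar hfhatF hftilF hfstarF hfstar_min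
    hftstar_min hint1 hint3 hint4 hint6 hint7 chi2 hchi2 hchi2_int M hM1 hM2 hM4
end

section
/- Utility bound for classification (Theorem 2). Let G be a set of measurable functions from 𝒳 to ℝ, let ĝ, g̃ ∈ G, let g*_G ∈ G be a minimizer of R_{0-1} over G, and let g̃*_G ∈ G be a minimizer of R̃_{0-1} over G. Then |R_{0-1}(g̃) − R_{0-1}(ĝ)| ≤ |R_{0-1}(ĝ) − R_{0-1}(g*_G)| + |R̃_{0-1}(g̃) − R̃_{0-1}(g̃*_G)| + Υ₃·√(χ²(P_X ‖ P_X̃)) + 2·‖η̂ − η‖_{L²(P_X)}·(C(g*_G) + 2·C(g̃*_G) + C(g̃)) + 4·Φ_{0-1}(g_{η̂}), where Υ₃ = √(Φ̃_{0-1}(g*_G)) + 2√(Φ̃_{0-1}(g̃*_G)) + √(Φ̃_{0-1}(g̃)), C(g) = √(P(sign(g(X)) ≠ sign(η̂(X) − 1/2))), and g_{η̂}(x) = η̂(x) − 1/2 is the plug-in classifier built from η̂. -/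
/-!
For every classifier `g`, `R(g) = R(g_η) + Φ(g)`: the 0-1 risk is the Bayes risk (that of
`g_η = η − ½`) plus the excess risk. Hence risk differences are excess-risk differences, and the minimality of `g*`
and `g̃*` reduces the bound to estimating `|Φ(g) − Φ̃(g)|` for `g = g̃, g*`. This transfer
costs three terms: replacing `sign(η − ½)` by `sign(η̂ − ½)` in the disagreement costs at most
`Φ(g_η̂)` (triangle inequality for sign disagreements); replacing the weight `|2η − 1|` by
`|2η̂ − 1|` costs `2‖η̂ − η‖ C(g)` (Cauchy–Schwarz under `p_X`); replacing `p_X` by `p_X̃`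
costs `√Φ̃(g) √χ²` (Cauchy–Schwarz under `p_X̃`, writing `p_X − p_X̃ = (p_X / p_X̃ − 1) p_X̃`).
-/

open MeasureTheory

noncomputable section

variable {α : Type*}

theorem norm_le_one_of_mem_Icc {t : ℝ} (ht : t ∈ Set.Icc (0 : ℝ) 1) : ‖t‖ ≤ 1 :=
  abs_le.2 ⟨by linarith [ht.1], ht.2⟩

theorem abs_two_mul_sub_one_mem_Icc {t : ℝ} (ht : t ∈ Set.Icc (0 : ℝ) 1) :
    |2 * t - 1| ∈ Set.Icc (0 : ℝ) 1 :=
  ⟨abs_nonneg _, abs_le.2 ⟨by linarith [ht.1], by linarith [ht.2]⟩⟩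

/-- `1{sign g ≠ sign h} · w`, with `sign t = 1` iff `0 ≤ t`. -/
def disagreementWeight (g h w : α → ℝ) (x : α) : ℝ :=
  if (0 ≤ g x ↔ 0 ≤ h x) then 0 else w x

section disagreementWeight

variable {g h k w w' η : α → ℝ} {x : α}

theorem disagreementWeight_mem_Icc (hw : w x ∈ Set.Icc (0 : ℝ) 1) :
    disagreementWeight g h w x ∈ Set.Icc (0 : ℝ) 1 := by
  unfold disagreementWeight
  split_ifs
  exacts [⟨le_rfl, zero_le_one⟩, hw]

theorem disagreementWeight_comm : disagreementWeight g h w = disagreementWeight h g w := by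
  ext x
  simp only [disagreementWeight, iff_comm]

theorem disagreementWeight_le_add (hw : 0 ≤ w x) :
    disagreementWeight g h w x ≤ disagreementWeight g k w x + disagreementWeight k h w x := by
  unfold disagreementWeight
  split_ifs <;> first | linarith | tauto

theorem disagreementWeight_sub :
    disagreementWeight g h w x - disagreementWeight g h w' x
      = (w x - w' x) * disagreementWeight g h 1 x := by
  unfold disagreementWeight
  split_ifs <;> simp

theorem condRisk_eq_bayes_add_disagreementWeight :
    (if 0 ≤ g x then 1 - η x else η x)
      = (if 0 ≤ η x - 1 / 2 then 1 - η x else η x)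
        + disagreementWeight g (fun x => η x - 1 / 2) (fun x => |2 * η x - 1|) x := by
  simp only [disagreementWeight]
  rcases le_or_gt 0 (η x - 1 / 2) with hη | hη
  · rw [abs_of_nonneg (by linarith : (0 : ℝ) ≤ 2 * η x - 1)]
    simp only [hη, iff_true]
    split_ifs <;> linarith
  · rw [abs_of_neg (by linarith : 2 * η x - 1 < 0)]
    simp only [not_le.mpr hη, iff_false]
    split_ifs <;> first | linarith | tauto

end disagreementWeight

variable [MeasurableSpace α] {μ : Measure α}

theorem measurable_disagreementWeight {g h w : α → ℝ} (hg : Measurable g) (hh : Measurable h)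
    (hw : Measurable w) : Measurable (disagreementWeight g h w) :=
  Measurable.ite ((measurableSet_le measurable_const hg).mem.iff
    (measurableSet_le measurable_const hh).mem).setOf measurable_const hw

theorem abs_integral_mul_mul_le_sqrt_mul_sqrt_s1 {a b d : α → ℝ} (hd : 0 ≤ᵐ[μ] d)
    (ha : Integrable (fun x => a x ^ 2 * d x) μ) (hb : Integrable (fun x => b x ^ 2 * d x) μ)
    (hab : Integrable (fun x => a x * b x * d x) μ) :
    |∫ x, a x * b x * d x ∂μ| ≤ √(∫ x, a x ^ 2 * d x ∂μ) * √(∫ x, b x ^ 2 * d x ∂μ) := by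
  set A := ∫ x, a x ^ 2 * d x ∂μ
  set B := ∫ x, a x * b x * d x ∂μ
  set C := ∫ x, b x ^ 2 * d x ∂μ
  have hA : 0 ≤ A := integral_nonneg_of_ae (hd.mono fun x hx => mul_nonneg (sq_nonneg _) hx)
  have hquad : ∀ t : ℝ, 0 ≤ C * (t * t) + 2 * B * t + A := by
    intro t
    have hexpand : (fun x => (t * b x + a x) ^ 2 * d x)
        = fun x => t * t * (b x ^ 2 * d x) + 2 * t * (a x * b x * d x) + a x ^ 2 * d x := by
      ext x; ring
    have hsq : 0 ≤ ∫ x, (t * b x + a x) ^ 2 * d x ∂μ :=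
      integral_nonneg_of_ae (hd.mono fun x hx => mul_nonneg (sq_nonneg _) hx)
    rw [hexpand, integral_add _ ha, integral_add (hb.const_mul _) (hab.const_mul _),
      integral_const_mul, integral_const_mul] at hsq
    · linarith
    · exact (hb.const_mul _).add (hab.const_mul _)
  have hB : B ^ 2 ≤ A * C := by
    have := discrim_le_zero hquad
    rw [discrim] at this
    nlinarith
  calc |B| = √(B ^ 2) := (Real.sqrt_sq_eq_abs B).symm
    _ ≤ √(A * C) := Real.sqrt_le_sqrt hB
    _ = √A * √C := Real.sqrt_mul hA C

theorem integral_sq_mul_le_integral_mul {f d : α → ℝ} (hd : Integrable d μ) (hd0 : 0 ≤ᵐ[μ] d)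
    (hf : AEStronglyMeasurable f μ) (hf01 : ∀ᵐ x ∂μ, f x ∈ Set.Icc (0 : ℝ) 1) :
    ∫ x, f x ^ 2 * d x ∂μ ≤ ∫ x, f x * d x ∂μ := by
  have hbound : ∀ᵐ x ∂μ, ‖f x‖ ≤ 1 := hf01.mono fun _ hx => norm_le_one_of_mem_Icc hx
  refine integral_mono_ae (hd.bdd_mul (c := 1) (hf.pow 2) (hbound.mono fun x hx => ?_))
    (hd.bdd_mul hf hbound) ?_
  · rw [norm_pow]; exact pow_le_one₀ (norm_nonneg _) hx
  · filter_upwards [hd0, hf01] with x hdx hfx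
    exact mul_le_mul_of_nonneg_right (sq_le hfx.1 hfx.2) hdx

def weightedDisagreement (μ : Measure α) (d g h w : α → ℝ) : ℝ :=
  ∫ x, disagreementWeight g h w x * d x ∂μ

def zeroOneRisk (μ : Measure α) (d η g : α → ℝ) : ℝ :=
  ∫ x, (if 0 ≤ g x then 1 - η x else η x) * d x ∂μ

def zeroOneExcessRisk (μ : Measure α) (d η g : α → ℝ) : ℝ :=
  weightedDisagreement μ d g (fun x => η x - 1 / 2) (fun x => |2 * η x - 1|)

section weightedDisagreement

variable {d g h k w w' : α → ℝ}

theorem integrable_disagreementWeight_mul (hd : Integrable d μ) (hg : Measurable g)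
    (hh : Measurable h) (hw : Measurable w) (hw01 : ∀ᵐ x ∂μ, w x ∈ Set.Icc (0 : ℝ) 1) :
    Integrable (fun x => disagreementWeight g h w x * d x) μ :=
  hd.bdd_mul (measurable_disagreementWeight hg hh hw).aestronglyMeasurable
    (hw01.mono fun _ hx => norm_le_one_of_mem_Icc (disagreementWeight_mem_Icc hx))

theorem weightedDisagreement_nonneg (hd0 : 0 ≤ᵐ[μ] d) (hw0 : 0 ≤ᵐ[μ] w) :
    0 ≤ weightedDisagreement μ d g h w := by
  refine integral_nonneg_of_ae ?_
  filter_upwards [hd0, hw0] with x hdx hwx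
  refine mul_nonneg ?_ hdx
  unfold disagreementWeight
  split_ifs
  exacts [le_rfl, hwx]

theorem weightedDisagreement_comm :
    weightedDisagreement μ d g h w = weightedDisagreement μ d h g w := by
  rw [weightedDisagreement, disagreementWeight_comm, weightedDisagreement]

theorem weightedDisagreement_le_add (hd : Integrable d μ) (hd0 : 0 ≤ᵐ[μ] d) (hg : Measurable g)
    (hh : Measurable h) (hk : Measurable k) (hw : Measurable w)
    (hw01 : ∀ᵐ x ∂μ, w x ∈ Set.Icc (0 : ℝ) 1) :
    weightedDisagreement μ d g h w
      ≤ weightedDisagreement μ d g k w + weightedDisagreement μ d k h w := by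
  have hint := fun {g h : α → ℝ} (hg : Measurable g) (hh : Measurable h) =>
    integrable_disagreementWeight_mul hd hg hh hw hw01
  rw [weightedDisagreement, weightedDisagreement, weightedDisagreement,
    ← integral_add (hint hg hk) (hint hk hh)]
  refine integral_mono_ae (hint hg hh) ((hint hg hk).add (hint hk hh)) ?_
  filter_upwards [hd0, hw01] with x hdx hwx
  simpa only [add_mul] using mul_le_mul_of_nonneg_right (disagreementWeight_le_add hwx.1) hdx

theorem abs_weightedDisagreement_sub_weight_le (hd : Integrable d μ) (hd0 : 0 ≤ᵐ[μ] d)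
    (hg : Measurable g) (hh : Measurable h) (hw : Measurable w) (hw' : Measurable w')
    (hw01 : ∀ᵐ x ∂μ, w x ∈ Set.Icc (0 : ℝ) 1) (hw'01 : ∀ᵐ x ∂μ, w' x ∈ Set.Icc (0 : ℝ) 1) :
    |weightedDisagreement μ d g h w - weightedDisagreement μ d g h w'|
      ≤ √(∫ x, (w x - w' x) ^ 2 * d x ∂μ) * √(weightedDisagreement μ d g h 1) := by
  have hb : Measurable (disagreementWeight g h 1) :=
    measurable_disagreementWeight hg hh measurable_const
  have hb01 : ∀ᵐ x ∂μ, disagreementWeight g h 1 x ∈ Set.Icc (0 : ℝ) 1 :=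
    ae_of_all _ fun _ => disagreementWeight_mem_Icc ⟨zero_le_one, le_rfl⟩
  have hsub : ∀ᵐ x ∂μ, |w x - w' x| ≤ 1 := by
    filter_upwards [hw01, hw'01] with x hx hx'
    rw [abs_le]
    constructor <;> linarith [hx.1, hx.2, hx'.1, hx'.2]
  have hdiff : weightedDisagreement μ d g h w - weightedDisagreement μ d g h w'
      = ∫ x, (w x - w' x) * disagreementWeight g h 1 x * d x ∂μ := by
    rw [weightedDisagreement, weightedDisagreement,
      ← integral_sub (integrable_disagreementWeight_mul hd hg hh hw hw01)
        (integrable_disagreementWeight_mul hd hg hh hw' hw'01)]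
    congr with x
    rw [← sub_mul, disagreementWeight_sub]
  rw [hdiff]
  refine (abs_integral_mul_mul_le_sqrt_mul_sqrt_s1 hd0 ?_ ?_ ?_).trans ?_
  · refine hd.bdd_mul (c := 1) ((hw.sub hw').pow_const 2).aestronglyMeasurable
      (hsub.mono fun x hx => ?_)
    rw [norm_pow]
    exact pow_le_one₀ (norm_nonneg _) hx
  · exact hd.bdd_mul (hb.pow_const 2).aestronglyMeasurable
      (hb01.mono fun x hx => norm_le_one_of_mem_Icc ⟨sq_nonneg _, pow_le_one₀ hx.1 hx.2⟩)
  · refine hd.bdd_mul (c := 1) ((hw.sub hw').mul hb).aestronglyMeasurable ?_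
    filter_upwards [hsub, hb01] with x hx hbx
    rw [norm_mul]
    exact mul_le_one₀ hx (norm_nonneg _) (norm_le_one_of_mem_Icc hbx)
  · gcongr
    exact integral_sq_mul_le_integral_mul hd hd0 hb.aestronglyMeasurable hb01

theorem abs_weightedDisagreement_sub_density_le {d' : α → ℝ} (hd : Integrable d μ)
    (hd' : Integrable d' μ) (hd'0 : 0 ≤ᵐ[μ] d') (hac : ∀ᵐ x ∂μ, d' x = 0 → d x = 0)
    (hχ : Integrable (fun x => d' x * (d x / d' x - 1) ^ 2) μ)
    (hg : Measurable g) (hh : Measurable h) (hw : Measurable w)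
    (hw01 : ∀ᵐ x ∂μ, w x ∈ Set.Icc (0 : ℝ) 1) :
    |weightedDisagreement μ d g h w - weightedDisagreement μ d' g h w|
      ≤ √(weightedDisagreement μ d' g h w) * √(∫ x, d' x * (d x / d' x - 1) ^ 2 ∂μ) := by
  set a := disagreementWeight g h w
  have ha := measurable_disagreementWeight hg hh hw
  have ha01 : ∀ᵐ x ∂μ, a x ∈ Set.Icc (0 : ℝ) 1 :=
    hw01.mono fun _ hx => disagreementWeight_mem_Icc hx
  have hint := integrable_disagreementWeight_mul hd hg hh hw hw01
  have hint' := integrable_disagreementWeight_mul hd' hg hh hw hw01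
  have hpt : (fun x => a x * d x - a x * d' x) =ᵐ[μ] fun x => a x * (d x / d' x - 1) * d' x := by
    filter_upwards [hac] with x hx
    rcases eq_or_ne (d' x) 0 with h0 | h0
    · simp [h0, hx h0]
    · field_simp
  have hdiff : weightedDisagreement μ d g h w - weightedDisagreement μ d' g h w
      = ∫ x, a x * (d x / d' x - 1) * d' x ∂μ := by
    rw [weightedDisagreement, weightedDisagreement, ← integral_sub hint hint']
    exact integral_congr_ae hpt
  have hχ_comm : (fun x => d' x * (d x / d' x - 1) ^ 2) = fun x => (d x / d' x - 1) ^ 2 * d' x := by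
    ext x; ring
  rw [hdiff, hχ_comm]
  refine (abs_integral_mul_mul_le_sqrt_mul_sqrt_s1 hd'0 ?_ (hχ_comm ▸ hχ)
    ((hint.sub hint').congr hpt)).trans ?_
  · exact hd'.bdd_mul (ha.pow_const 2).aestronglyMeasurable
      (ha01.mono fun x hx => norm_le_one_of_mem_Icc ⟨sq_nonneg _, pow_le_one₀ hx.1 hx.2⟩)
  · gcongr
    exact integral_sq_mul_le_integral_mul hd' hd'0 ha.aestronglyMeasurable ha01

end weightedDisagreement

section zeroOne

variable {d d' η η' g : α → ℝ}

theorem integrable_condRisk_mul (hd : Integrable d μ) (hη : Measurable η)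
    (hη01 : ∀ᵐ x ∂μ, η x ∈ Set.Icc (0 : ℝ) 1) (hg : Measurable g) :
    Integrable (fun x => (if 0 ≤ g x then 1 - η x else η x) * d x) μ := by
  refine hd.bdd_mul (c := 1) (Measurable.ite (measurableSet_le measurable_const hg)
    (measurable_const.sub hη) hη).aestronglyMeasurable (hη01.mono fun x hx => ?_)
  refine norm_le_one_of_mem_Icc ?_
  split_ifs
  exacts [⟨by linarith [hx.2], by linarith [hx.1]⟩, hx]

theorem zeroOneRisk_eq_add_zeroOneExcessRisk (hd : Integrable d μ) (hη : Measurable η)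
    (hη01 : ∀ᵐ x ∂μ, η x ∈ Set.Icc (0 : ℝ) 1) (hg : Measurable g) :
    zeroOneRisk μ d η g
      = zeroOneRisk μ d η (fun x => η x - 1 / 2) + zeroOneExcessRisk μ d η g := by
  rw [zeroOneRisk, zeroOneRisk, zeroOneExcessRisk, weightedDisagreement,
    ← integral_add (integrable_condRisk_mul hd hη hη01 (hη.sub_const _))
      (integrable_disagreementWeight_mul hd hg (hη.sub_const _)
        ((hη.const_mul 2).sub_const 1).abs
        (hη01.mono fun _ hx => abs_two_mul_sub_one_mem_Icc hx))]
  congr with x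
  rw [condRisk_eq_bayes_add_disagreementWeight, add_mul]

theorem sqrt_integral_sq_abs_sub_abs_le (hd : Integrable d μ) (hd0 : 0 ≤ᵐ[μ] d)
    (hη : Measurable η) (hη' : Measurable η') (hη01 : ∀ᵐ x ∂μ, η x ∈ Set.Icc (0 : ℝ) 1)
    (hη'01 : ∀ᵐ x ∂μ, η' x ∈ Set.Icc (0 : ℝ) 1) :
    √(∫ x, (|2 * η x - 1| - |2 * η' x - 1|) ^ 2 * d x ∂μ)
      ≤ 2 * √(∫ x, (η' x - η x) ^ 2 * d x ∂μ) := by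
  have hdiff : ∀ᵐ x ∂μ, |η' x - η x| ≤ 1 := by
    filter_upwards [hη01, hη'01] with x hx hx'
    rw [abs_le]
    constructor <;> linarith [hx.1, hx.2, hx'.1, hx'.2]
  have hsq : Integrable (fun x => (η' x - η x) ^ 2 * d x) μ := by
    refine hd.bdd_mul (c := 1) ((hη'.sub hη).pow_const 2).aestronglyMeasurable
      (hdiff.mono fun x hx => ?_)
    rw [norm_pow]
    exact pow_le_one₀ (norm_nonneg _) hx
  have hpt : ∀ x, (|2 * η x - 1| - |2 * η' x - 1|) ^ 2 ≤ 2 ^ 2 * (η' x - η x) ^ 2 := fun x =>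
    calc (|2 * η x - 1| - |2 * η' x - 1|) ^ 2 ≤ (2 * η x - 1 - (2 * η' x - 1)) ^ 2 :=
          sq_le_sq.2 (abs_abs_sub_abs_le_abs_sub _ _)
      _ = 2 ^ 2 * (η' x - η x) ^ 2 := by ring
  calc √(∫ x, (|2 * η x - 1| - |2 * η' x - 1|) ^ 2 * d x ∂μ)
      ≤ √(∫ x, 2 ^ 2 * ((η' x - η x) ^ 2 * d x) ∂μ) := by
        refine Real.sqrt_le_sqrt (integral_mono_of_nonneg ?_ (hsq.const_mul _) ?_)
        · exact hd0.mono fun x hx => mul_nonneg (sq_nonneg _) hx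
        · filter_upwards [hd0] with x hx
          rw [← mul_assoc]
          exact mul_le_mul_of_nonneg_right (hpt x) hx
    _ = 2 * √(∫ x, (η' x - η x) ^ 2 * d x ∂μ) := by
        rw [integral_const_mul, Real.sqrt_mul (by positivity), Real.sqrt_sq zero_le_two]

theorem abs_zeroOneExcessRisk_sub_le (hd : Integrable d μ) (hd0 : 0 ≤ᵐ[μ] d)
    (hd' : Integrable d' μ) (hd'0 : 0 ≤ᵐ[μ] d') (hac : ∀ᵐ x ∂μ, d' x = 0 → d x = 0)
    (hχ : Integrable (fun x => d' x * (d x / d' x - 1) ^ 2) μ)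
    (hη : Measurable η) (hη' : Measurable η') (hη01 : ∀ᵐ x ∂μ, η x ∈ Set.Icc (0 : ℝ) 1)
    (hη'01 : ∀ᵐ x ∂μ, η' x ∈ Set.Icc (0 : ℝ) 1) (hg : Measurable g) :
    |zeroOneExcessRisk μ d η g - zeroOneExcessRisk μ d' η' g|
      ≤ √(zeroOneExcessRisk μ d' η' g) * √(∫ x, d' x * (d x / d' x - 1) ^ 2 ∂μ)
        + 2 * √(∫ x, (η' x - η x) ^ 2 * d x ∂μ)
          * √(weightedDisagreement μ d g (fun x => η' x - 1 / 2) 1)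
        + zeroOneExcessRisk μ d η (fun x => η' x - 1 / 2) := by
  set e := fun x => η x - 1 / 2
  set e' := fun x => η' x - 1 / 2
  set w := fun x => |2 * η x - 1|
  set w' := fun x => |2 * η' x - 1|
  have he : Measurable e := hη.sub_const _
  have he' : Measurable e' := hη'.sub_const _
  have hw : Measurable w := ((hη.const_mul 2).sub_const 1).abs
  have hw' : Measurable w' := ((hη'.const_mul 2).sub_const 1).abs
  have hw01 : ∀ᵐ x ∂μ, w x ∈ Set.Icc (0 : ℝ) 1 :=
    hη01.mono fun _ hx => abs_two_mul_sub_one_mem_Icc hx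
  have hw'01 : ∀ᵐ x ∂μ, w' x ∈ Set.Icc (0 : ℝ) 1 :=
    hη'01.mono fun _ hx => abs_two_mul_sub_one_mem_Icc hx
  have hlabel₁ : zeroOneExcessRisk μ d η g
      ≤ weightedDisagreement μ d g e' w + zeroOneExcessRisk μ d η e' :=
    weightedDisagreement_le_add hd hd0 hg he he' hw hw01
  have hlabel₂ : weightedDisagreement μ d g e' w
      ≤ zeroOneExcessRisk μ d η g + zeroOneExcessRisk μ d η e' := by
    have := weightedDisagreement_le_add hd hd0 hg he' he hw hw01
    rwa [weightedDisagreement_comm (g := e)] at this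
  have hweight := abs_weightedDisagreement_sub_weight_le hd hd0 hg he' hw hw' hw01 hw'01
  have hlip := mul_le_mul_of_nonneg_right
    (sqrt_integral_sq_abs_sub_abs_le hd hd0 hη hη' hη01 hη'01)
    (Real.sqrt_nonneg (weightedDisagreement μ d g e' 1))
  have hdensity := abs_weightedDisagreement_sub_density_le hd hd' hd'0 hac hχ hg he' hw' hw'01
  rw [abs_sub_le_iff] at hweight hdensity ⊢
  unfold zeroOneExcessRisk at *
  constructor <;> linarith

theorem abs_zeroOneRisk_sub_le (hd : Integrable d μ) (hd0 : 0 ≤ᵐ[μ] d)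
    (hd' : Integrable d' μ) (hd'0 : 0 ≤ᵐ[μ] d') (hac : ∀ᵐ x ∂μ, d' x = 0 → d x = 0)
    (hχ : Integrable (fun x => d' x * (d x / d' x - 1) ^ 2) μ)
    (hη : Measurable η) (hη' : Measurable η') (hη01 : ∀ᵐ x ∂μ, η x ∈ Set.Icc (0 : ℝ) 1)
    (hη'01 : ∀ᵐ x ∂μ, η' x ∈ Set.Icc (0 : ℝ) 1) {ghat gtil gstar gtstar : α → ℝ}
    (hgtil : Measurable gtil) (hgstar : Measurable gstar)
    (hmin : zeroOneRisk μ d η gstar ≤ zeroOneRisk μ d η gtil)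
    (hmin' : zeroOneRisk μ d' η' gtstar ≤ zeroOneRisk μ d' η' gstar) :
    |zeroOneRisk μ d η gtil - zeroOneRisk μ d η ghat|
      ≤ |zeroOneRisk μ d η ghat - zeroOneRisk μ d η gstar|
        + |zeroOneRisk μ d' η' gtil - zeroOneRisk μ d' η' gtstar|
        + (√(zeroOneExcessRisk μ d' η' gstar) + √(zeroOneExcessRisk μ d' η' gtil))
          * √(∫ x, d' x * (d x / d' x - 1) ^ 2 ∂μ)
        + 2 * √(∫ x, (η' x - η x) ^ 2 * d x ∂μ)
          * (√(weightedDisagreement μ d gstar (fun x => η' x - 1 / 2) 1)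
            + √(weightedDisagreement μ d gtil (fun x => η' x - 1 / 2) 1))
        + 2 * zeroOneExcessRisk μ d η (fun x => η' x - 1 / 2) := by
  have hgap := abs_sub_le (zeroOneRisk μ d η gtil) (zeroOneRisk μ d η gstar)
    (zeroOneRisk μ d η ghat)
  rw [abs_sub_comm (zeroOneRisk μ d η gstar), abs_of_nonneg (sub_nonneg.2 hmin)] at hgap
  have hexcess := zeroOneRisk_eq_add_zeroOneExcessRisk hd hη hη01 hgtil
  have hexcess_star := zeroOneRisk_eq_add_zeroOneExcessRisk hd hη hη01 hgstar
  have hexcess' := zeroOneRisk_eq_add_zeroOneExcessRisk hd' hη' hη'01 hgtil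
  have hexcess'_star := zeroOneRisk_eq_add_zeroOneExcessRisk hd' hη' hη'01 hgstar
  have htil := abs_sub_le_iff.1
    (abs_zeroOneExcessRisk_sub_le hd hd0 hd' hd'0 hac hχ hη hη' hη01 hη'01 hgtil)
  have hstar := abs_sub_le_iff.1
    (abs_zeroOneExcessRisk_sub_le hd hd0 hd' hd'0 hac hχ hη hη' hη01 hη'01 hgstar)
  linarith [htil.1, hstar.2,
    le_abs_self (zeroOneRisk μ d' η' gtil - zeroOneRisk μ d' η' gtstar)]

end zeroOne

end

theorem stmt1_general
    {p : ℕ} (𝒳 : Set (Fin p → ℝ)) (h𝒳 : MeasurableSet 𝒳)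
    -- densities of the original and synthetic features
    (pX pXt : (Fin p → ℝ) → ℝ)
    (hpX_nonneg : ∀ x ∈ 𝒳, 0 ≤ pX x) (hpXt_nonneg : ∀ x ∈ 𝒳, 0 ≤ pXt x)
    (hpX_int : IntegrableOn pX 𝒳) (hpXt_int : IntegrableOn pXt 𝒳)
    (hpos : ∀ x ∈ 𝒳, 0 < pX x → 0 < pXt x)
    -- regression functions (conditional probabilities of label 1)
    (η ηhat : (Fin p → ℝ) → ℝ)
    (hη : Measurable η) (hηhat : Measurable ηhat)
    (hη01 : ∀ x ∈ 𝒳, η x ∈ Set.Icc (0 : ℝ) 1) (hηhat01 : ∀ x ∈ 𝒳, ηhat x ∈ Set.Icc (0 : ℝ) 1)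
    -- model class
    (G : Set ((Fin p → ℝ) → ℝ)) (hG : ∀ g ∈ G, Measurable g)
    -- risks, excess risks and the quantity C(g)
    (R01 Rt01 Φ01 Φt01 Cg : ((Fin p → ℝ) → ℝ) → ℝ)
    (hR01 : ∀ g, R01 g = ∫ x in 𝒳, (if 0 ≤ g x then 1 - η x else η x) * pX x)
    (hRt01 : ∀ g, Rt01 g = ∫ x in 𝒳, (if 0 ≤ g x then 1 - ηhat x else ηhat x) * pXt x)
    (hΦ01 : ∀ g, Φ01 g =
      ∫ x in 𝒳, (if (0 ≤ g x) ↔ (0 ≤ η x - 1 / 2) then (0 : ℝ) else |2 * η x - 1|) * pX x)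
    (hΦt01 : ∀ g, Φt01 g =
      ∫ x in 𝒳, (if (0 ≤ g x) ↔ (0 ≤ ηhat x - 1 / 2) then (0 : ℝ) else |2 * ηhat x - 1|) * pXt x)
    (hCg : ∀ g, Cg g = Real.sqrt
      (∫ x in 𝒳, (if (0 ≤ g x) ↔ (0 ≤ ηhat x - 1 / 2) then (0 : ℝ) else 1) * pX x))
    -- estimated models and population minimizers
    (ghat gtil gstar gtstar : (Fin p → ℝ) → ℝ)
    (hgtilG : gtil ∈ G) (hgstarG : gstar ∈ G)
    (hgstar_min : ∀ g ∈ G, R01 gstar ≤ R01 g)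
    (hgtstar_min : ∀ g ∈ G, Rt01 gtstar ≤ Rt01 g)
    -- χ²-divergence between the feature distributions, assumed finite
    (chi2 : ℝ)
    (hchi2 : chi2 = ∫ x in 𝒳, pXt x * (pX x / pXt x - 1) ^ 2)
    (hchi2_int : IntegrableOn (fun x => pXt x * (pX x / pXt x - 1) ^ 2) 𝒳) :
    |R01 gtil - R01 ghat| ≤
      |R01 ghat - R01 gstar| + |Rt01 gtil - Rt01 gtstar|
        + (Real.sqrt (Φt01 gstar) + 2 * Real.sqrt (Φt01 gtstar) + Real.sqrt (Φt01 gtil))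
            * Real.sqrt chi2
        + 2 * Real.sqrt (∫ x in 𝒳, (ηhat x - η x) ^ 2 * pX x)
            * (Cg gstar + 2 * Cg gtstar + Cg gtil)
        + 4 * Φ01 (fun x => ηhat x - 1 / 2) := by
  set μ := volume.restrict 𝒳
  obtain rfl : R01 = zeroOneRisk μ pX η := funext hR01
  obtain rfl : Rt01 = zeroOneRisk μ pXt ηhat := funext hRt01
  obtain rfl : Φ01 = zeroOneExcessRisk μ pX η := funext hΦ01
  obtain rfl : Φt01 = zeroOneExcessRisk μ pXt ηhat := funext hΦt01
  obtain rfl : Cg = fun g => √(weightedDisagreement μ pX g (fun x => ηhat x - 1 / 2) 1) :=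
    funext hCg
  subst hchi2
  have hpX0 : 0 ≤ᵐ[μ] pX := ae_restrict_of_forall_mem h𝒳 hpX_nonneg
  have hac : ∀ᵐ x ∂μ, pXt x = 0 → pX x = 0 := ae_restrict_of_forall_mem h𝒳 fun x hx h0 =>
    (hpX_nonneg x hx).antisymm' (not_lt.1 fun hlt => (hpos x hx hlt).ne' h0)
  have hbound := abs_zeroOneRisk_sub_le hpX_int hpX0 hpXt_int
    (ae_restrict_of_forall_mem h𝒳 hpXt_nonneg) hac hchi2_int hη hηhat
    (ae_restrict_of_forall_mem h𝒳 hη01) (ae_restrict_of_forall_mem h𝒳 hηhat01) (ghat := ghat)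
    (hG _ hgtilG) (hG _ hgstarG) (hgstar_min gtil hgtilG) (hgtstar_min gstar hgstarG)
  have hbayes_nonneg : 0 ≤ zeroOneExcessRisk μ pX η (fun x => ηhat x - 1 / 2) :=
    weightedDisagreement_nonneg hpX0 (ae_of_all _ fun _ => abs_nonneg _)
  have hχ_term_nonneg : 0 ≤ √(zeroOneExcessRisk μ pXt ηhat gtstar)
      * √(∫ x, pXt x * (pX x / pXt x - 1) ^ 2 ∂μ) := by positivity
  have hL2_term_nonneg : 0 ≤ √(∫ x, (ηhat x - η x) ^ 2 * pX x ∂μ)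
      * √(weightedDisagreement μ pX gtstar (fun x => ηhat x - 1 / 2) 1) := by positivity
  linarith

/-- **Utility bound for classification (Theorem 2).**
`sign(t) = 1` when `t ≥ 0` and `−1` otherwise; the 0-1 risk of `g` under the original
distribution (with `P(Z = 1 | X = x) = η(x)`) is
`R_{0-1}(g) = ∫ (if sign(g x) = 1 then 1 − η x else η x) p_X`, and likewise for the
synthetic distribution with `η̂` and `p_X̃`.  `ghat`, `gtil` are the classifiers estimated
from original and synthetic data, `gstar` minimizes `R_{0-1}` over `G` and `gtstar`
minimizes `R̃_{0-1}` over `G`. -/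
theorem stmt1
    {p : ℕ} (𝒳 : Set (Fin p → ℝ)) (h𝒳 : MeasurableSet 𝒳)
    -- densities of the original and synthetic features
    (pX pXt : (Fin p → ℝ) → ℝ)
    (hpX_meas : Measurable pX) (hpXt_meas : Measurable pXt)
    (hpX_nonneg : ∀ x ∈ 𝒳, 0 ≤ pX x) (hpXt_nonneg : ∀ x ∈ 𝒳, 0 ≤ pXt x)
    (hpX_int : IntegrableOn pX 𝒳) (hpXt_int : IntegrableOn pXt 𝒳)
    (hpX_one : (∫ x in 𝒳, pX x) = 1) (hpXt_one : (∫ x in 𝒳, pXt x) = 1)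
    (hpos : ∀ x ∈ 𝒳, 0 < pX x → 0 < pXt x)
    -- regression functions (conditional probabilities of label 1)
    (η ηhat : (Fin p → ℝ) → ℝ)
    (hη : Measurable η) (hηhat : Measurable ηhat)
    (hη01 : ∀ x ∈ 𝒳, η x ∈ Set.Icc (0 : ℝ) 1) (hηhat01 : ∀ x ∈ 𝒳, ηhat x ∈ Set.Icc (0 : ℝ) 1)
    -- model class
    (G : Set ((Fin p → ℝ) → ℝ)) (hG : ∀ g ∈ G, Measurable g)
    -- risks, excess risks and the quantity C(g)
    (R01 Rt01 Φ01 Φt01 Cg : ((Fin p → ℝ) → ℝ) → ℝ)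
    (hR01 : ∀ g, R01 g = ∫ x in 𝒳, (if 0 ≤ g x then 1 - η x else η x) * pX x)
    (hRt01 : ∀ g, Rt01 g = ∫ x in 𝒳, (if 0 ≤ g x then 1 - ηhat x else ηhat x) * pXt x)
    (hΦ01 : ∀ g, Φ01 g =
      ∫ x in 𝒳, (if (0 ≤ g x) ↔ (0 ≤ η x - 1 / 2) then (0 : ℝ) else |2 * η x - 1|) * pX x)
    (hΦt01 : ∀ g, Φt01 g =
      ∫ x in 𝒳, (if (0 ≤ g x) ↔ (0 ≤ ηhat x - 1 / 2) then (0 : ℝ) else |2 * ηhat x - 1|) * pXt x)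
    (hCg : ∀ g, Cg g = Real.sqrt
      (∫ x in 𝒳, (if (0 ≤ g x) ↔ (0 ≤ ηhat x - 1 / 2) then (0 : ℝ) else 1) * pX x))
    -- estimated models and population minimizers
    (ghat gtil gstar gtstar : (Fin p → ℝ) → ℝ)
    (hghatG : ghat ∈ G) (hgtilG : gtil ∈ G) (hgstarG : gstar ∈ G) (hgtstarG : gtstar ∈ G)
    (hgstar_min : ∀ g ∈ G, R01 gstar ≤ R01 g)
    (hgtstar_min : ∀ g ∈ G, Rt01 gtstar ≤ Rt01 g)
    -- χ²-divergence between the feature distributions, assumed finite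
    (chi2 : ℝ)
    (hchi2 : chi2 = ∫ x in 𝒳, pXt x * (pX x / pXt x - 1) ^ 2)
    (hchi2_int : IntegrableOn (fun x => pXt x * (pX x / pXt x - 1) ^ 2) 𝒳) :
    |R01 gtil - R01 ghat| ≤
      |R01 ghat - R01 gstar| + |Rt01 gtil - Rt01 gtstar|
        + (Real.sqrt (Φt01 gstar) + 2 * Real.sqrt (Φt01 gtstar) + Real.sqrt (Φt01 gtil))
            * Real.sqrt chi2
        + 2 * Real.sqrt (∫ x in 𝒳, (ηhat x - η x) ^ 2 * pX x)
            * (Cg gstar + 2 * Cg gtstar + Cg gtil)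
        + 4 * Φ01 (fun x => ηhat x - 1 / 2) :=
  stmt1_general 𝒳 h𝒳 pX pXt hpX_nonneg hpXt_nonneg hpX_int hpXt_int hpos η ηhat hη hηhat hη01
    hηhat01 G hG R01 Rt01 Φ01 Φt01 Cg hR01 hRt01 hΦ01 hΦt01 hCg ghat gtil gstar gtstar hgtilG
    hgstarG hgstar_min hgtstar_min chi2 hchi2 hchi2_int
end

section
/- (V, d)-fidelity with d > 1 gives a χ²-divergence bound (Lemma S1, part 3, converse direction). Let p and p̃ be probability densities on 𝒳 ⊆ ℝ^p, each strictly positive wherever the other is positive, satisfying the (V, d)-fidelity level with d > 1. Then for every C ≥ 2, max{ χ²(P ‖ P̃), χ²(P̃ ‖ P) } ≤ (C − 1)² + V·2^d·C^{−(d−1)}·(2^{d−1} − 1)^{−1}, where χ²(P ‖ P̃) = ∫ p̃(x)(p(x)/p̃(x) − 1)² dx and χ²(P̃ ‖ P) = ∫ p(x)(p̃(x)/p(x) − 1)² dx. -/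
/-!
Split the χ² integral at the level set `{C q ≤ p}`. Below it the likelihood ratio `p / q` lies in
`[0, C)`, so the integrand is at most `(C - 1)² q`. Above it, cut into the dyadic shells
`{2^j C q ≤ p < 2^(j+1) C q}`: on shell `j` the integrand is at most `2^(j+1) C p`, and fidelity
bounds the `p`-mass of the shell by `V (2^j C)^(-d)`. Since `d > 1` these bounds form a convergent
geometric series in `2^(1-d)`, whose sum is the second term of the bound.
-/

open MeasureTheory

lemma mul_div_sub_one_sq_le_of_le {p q C : ℝ} (hp : 0 ≤ p) (hq : 0 ≤ q) (hpC : p ≤ C * q)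
    (hC : 2 ≤ C) : q * (p / q - 1) ^ 2 ≤ (C - 1) ^ 2 * q := by
  rcases hq.eq_or_lt with rfl | hq
  · simp
  have h0 : 0 ≤ p / q := div_nonneg hp hq.le
  have hC' : p / q ≤ C := (div_le_iff₀ hq).2 hpC
  have : (p / q - 1) ^ 2 ≤ (C - 1) ^ 2 := by nlinarith
  nlinarith

lemma mul_div_sub_one_sq_le_mul {p q M : ℝ} (hq : 0 < q) (hqp : q ≤ 2 * p) (hpM : p ≤ M * q) :
    q * (p / q - 1) ^ 2 ≤ M * p := by
  have hp : 0 ≤ p := by linarith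
  calc q * (p / q - 1) ^ 2 = (p - q) ^ 2 / q := by field_simp
    _ ≤ p ^ 2 / q := div_le_div_of_nonneg_right (by nlinarith) hq.le
    _ ≤ M * p := by rw [div_le_iff₀ hq]; nlinarith

lemma hasSum_dyadic_fidelity_bound {V d C : ℝ} (hd : 1 < d) (hC : 0 < C) :
    HasSum (fun j : ℕ => 2 ^ (j + 1) * C * (V * ((2 : ℝ) ^ j * C) ^ (-d)))
      (V * 2 ^ d * C ^ (-(d - 1)) * ((2 : ℝ) ^ (d - 1) - 1)⁻¹) := by
  set X : ℝ := (2 : ℝ) ^ (d - 1)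
  have hX : 1 < X := Real.one_lt_rpow one_lt_two (by linarith)
  have hr : (2 : ℝ) ^ (1 - d) = X⁻¹ := by rw [← Real.rpow_neg zero_le_two, neg_sub]
  have hterm : (fun j : ℕ => 2 ^ (j + 1) * C * (V * ((2 : ℝ) ^ j * C) ^ (-d)))
      = fun j => 2 * V * C ^ (-(d - 1)) * X⁻¹ ^ j := by
    ext j
    have hCd : C ^ (-(d - 1)) = C * C ^ (-d) := by
      rw [← Real.rpow_one_add' hC.le (by linarith)]; ring_nf
    have h2j : ((2 : ℝ) ^ j) ^ (-d) * 2 ^ j = X⁻¹ ^ j := by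
      rw [← Real.rpow_pow_comm zero_le_two, ← mul_pow, ← Real.rpow_add_one two_ne_zero, ← hr]
      ring_nf
    rw [Real.mul_rpow (by positivity) hC.le, hCd, ← h2j, pow_succ]
    ring
  have h2d : (2 : ℝ) ^ d = 2 * X := by
    rw [← Real.rpow_one_add' zero_le_two (by linarith), add_sub_cancel]
  have hgeom : (1 - X⁻¹)⁻¹ = X * (X - 1)⁻¹ := by
    field_simp
  rw [hterm, h2d, show V * (2 * X) * C ^ (-(d - 1)) * (X - 1)⁻¹
      = 2 * V * C ^ (-(d - 1)) * (1 - X⁻¹)⁻¹ by rw [hgeom]; ring]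
  exact (hasSum_geometric_of_lt_one (inv_nonneg.2 (by linarith))
    (inv_lt_one_of_one_lt₀ hX)).mul_left _

section Fidelity

variable {α : Type*} {p q : α → ℝ}

noncomputable def chiSqIntegrand (p q : α → ℝ) (x : α) : ENNReal :=
  ENNReal.ofReal (q x * (p x / q x - 1) ^ 2)

lemma chiSqIntegrand_of_nonpos {x : α} (hq : q x ≤ 0) : chiSqIntegrand p q x = 0 :=
  ENNReal.ofReal_of_nonpos (mul_nonpos_of_nonpos_of_nonneg hq (sq_nonneg _))

def dyadicShell (p q : α → ℝ) (C : ℝ) (j : ℕ) : Set α :=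
  {x | 2 ^ j * C * q x ≤ p x ∧ p x < 2 ^ (j + 1) * C * q x}

lemma setOf_mul_le_subset_union_dyadicShell {C : ℝ} (hC : 0 < C) :
    {x | C * q x ≤ p x} ⊆ {x | q x ≤ 0} ∪ ⋃ j, dyadicShell p q C j := by
  intro x hx
  rcases le_or_gt (q x) 0 with hq | hq
  · exact Or.inl hq
  have hCq : 0 < C * q x := mul_pos hC hq
  obtain ⟨j, hlo, hhi⟩ := exists_nat_pow_near ((one_le_div hCq).2 hx) one_lt_two
  refine Or.inr (Set.mem_iUnion.2 ⟨j, ?_, ?_⟩)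
  · rw [mul_assoc]; exact (le_div_iff₀ hCq).1 hlo
  · rw [mul_assoc]; exact (div_lt_iff₀ hCq).1 hhi

variable [MeasurableSpace α] {μ : Measure α}

noncomputable def chiSqDiv (μ : Measure α) (p q : α → ℝ) : ENNReal :=
  ∫⁻ x, chiSqIntegrand p q x ∂μ

lemma setLIntegral_chiSqIntegrand_le_of_le {C : ℝ} (hp0 : 0 ≤ᵐ[μ] p) (hq : Measurable q)
    (hq0 : 0 ≤ᵐ[μ] q) (hq_int : Integrable q μ) (hq_one : ∫ x, q x ∂μ = 1) (hC : 2 ≤ C)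
    (s : Set α) (hs : ∀ x ∈ s, p x ≤ C * q x) :
    ∫⁻ x in s, chiSqIntegrand p q x ∂μ ≤ ENNReal.ofReal ((C - 1) ^ 2) := by
  calc ∫⁻ x in s, chiSqIntegrand p q x ∂μ
      ≤ ∫⁻ x in s, ENNReal.ofReal ((C - 1) ^ 2) * ENNReal.ofReal (q x) ∂μ := by
        refine setLIntegral_mono_ae (by fun_prop) ?_
        filter_upwards [hp0, hq0] with x hpx hqx hx
        rw [chiSqIntegrand, ← ENNReal.ofReal_mul (sq_nonneg _)]
        exact ENNReal.ofReal_le_ofReal (mul_div_sub_one_sq_le_of_le hpx hqx (hs x hx) hC)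
    _ ≤ ∫⁻ x, ENNReal.ofReal ((C - 1) ^ 2) * ENNReal.ofReal (q x) ∂μ :=
        setLIntegral_le_lintegral _ _
    _ = ENNReal.ofReal ((C - 1) ^ 2) := by
        rw [lintegral_const_mul _ hq.ennreal_ofReal,
          ← ofReal_integral_eq_lintegral_ofReal hq_int hq0, hq_one, ENNReal.ofReal_one, mul_one]

lemma setLIntegral_chiSqIntegrand_dyadicShell_le {V d C : ℝ} (hp : Measurable p)
    (hp0 : 0 ≤ᵐ[μ] p) (hp_int : Integrable p μ)
    (hfid : ∀ c : ℝ, 0 < c → ∫ x in {x | c * q x ≤ p x}, p x ∂μ ≤ V * c ^ (-d))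
    (hC : 2 ≤ C) (j : ℕ) :
    ∫⁻ x in dyadicShell p q C j, chiSqIntegrand p q x ∂μ
      ≤ ENNReal.ofReal (2 ^ (j + 1) * C * (V * ((2 : ℝ) ^ j * C) ^ (-d))) := by
  have h2c : 2 ≤ (2 : ℝ) ^ j * C :=
    hC.trans (le_mul_of_one_le_left (by linarith) (one_le_pow₀ one_le_two))
  calc ∫⁻ x in dyadicShell p q C j, chiSqIntegrand p q x ∂μ
      ≤ ∫⁻ x in dyadicShell p q C j,
          ENNReal.ofReal (2 ^ (j + 1) * C) * ENNReal.ofReal (p x) ∂μ := by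
        refine setLIntegral_mono (by fun_prop) fun x ⟨hlo, hhi⟩ => ?_
        rcases le_or_gt (q x) 0 with hq | hq
        · rw [chiSqIntegrand_of_nonpos hq]
          exact bot_le
        · rw [chiSqIntegrand, ← ENNReal.ofReal_mul (by positivity)]
          exact ENNReal.ofReal_le_ofReal (mul_div_sub_one_sq_le_mul hq (by nlinarith) hhi.le)
    _ ≤ ∫⁻ x in {x | 2 ^ j * C * q x ≤ p x},
          ENNReal.ofReal (2 ^ (j + 1) * C) * ENNReal.ofReal (p x) ∂μ :=
        lintegral_mono_set fun x hx => hx.1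
    _ = ENNReal.ofReal (2 ^ (j + 1) * C) *
          ENNReal.ofReal (∫ x in {x | 2 ^ j * C * q x ≤ p x}, p x ∂μ) := by
        rw [lintegral_const_mul _ hp.ennreal_ofReal,
          ofReal_integral_eq_lintegral_ofReal hp_int.integrableOn (ae_restrict_of_ae hp0)]
    _ ≤ ENNReal.ofReal (2 ^ (j + 1) * C) * ENNReal.ofReal (V * ((2 : ℝ) ^ j * C) ^ (-d)) := by
        gcongr
        exact hfid _ (by positivity)
    _ = ENNReal.ofReal (2 ^ (j + 1) * C * (V * ((2 : ℝ) ^ j * C) ^ (-d))) :=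
        (ENNReal.ofReal_mul (by positivity)).symm

lemma setLIntegral_chiSqIntegrand_le_of_fidelity {V d C : ℝ} (hp : Measurable p)
    (hp0 : 0 ≤ᵐ[μ] p) (hp_int : Integrable p μ) (hV : 0 ≤ V) (hd : 1 < d)
    (hfid : ∀ c : ℝ, 0 < c → ∫ x in {x | c * q x ≤ p x}, p x ∂μ ≤ V * c ^ (-d))
    (hC : 2 ≤ C) :
    ∫⁻ x in {x | C * q x ≤ p x}, chiSqIntegrand p q x ∂μ
      ≤ ENNReal.ofReal (V * 2 ^ d * C ^ (-(d - 1)) * ((2 : ℝ) ^ (d - 1) - 1)⁻¹) := by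
  have hC0 : 0 < C := by linarith
  have hsum := hasSum_dyadic_fidelity_bound (V := V) hd hC0
  have hterm_nonneg : ∀ j : ℕ, 0 ≤ 2 ^ (j + 1) * C * (V * ((2 : ℝ) ^ j * C) ^ (-d)) :=
    fun j => by positivity
  calc ∫⁻ x in {x | C * q x ≤ p x}, chiSqIntegrand p q x ∂μ
      ≤ ∫⁻ x in {x | q x ≤ 0} ∪ ⋃ j, dyadicShell p q C j, chiSqIntegrand p q x ∂μ :=
        lintegral_mono_set (setOf_mul_le_subset_union_dyadicShell hC0)
    _ ≤ ∫⁻ x in {x | q x ≤ 0}, chiSqIntegrand p q x ∂μ +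
          ∑' j, ∫⁻ x in dyadicShell p q C j, chiSqIntegrand p q x ∂μ :=
        (lintegral_union_le _ _ _).trans (add_le_add_right (lintegral_iUnion_le _ _) _)
    _ ≤ 0 + ∑' j, ENNReal.ofReal (2 ^ (j + 1) * C * (V * ((2 : ℝ) ^ j * C) ^ (-d))) := by
        gcongr with j
        · exact (setLIntegral_mono measurable_const fun x hq =>
            (chiSqIntegrand_of_nonpos hq).le).trans_eq lintegral_zero
        · exact setLIntegral_chiSqIntegrand_dyadicShell_le hp hp0 hp_int hfid hC j
    _ = ENNReal.ofReal (V * 2 ^ d * C ^ (-(d - 1)) * ((2 : ℝ) ^ (d - 1) - 1)⁻¹) := by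
        rw [zero_add, ← ENNReal.ofReal_tsum_of_nonneg hterm_nonneg hsum.summable, hsum.tsum_eq]

theorem chiSqDiv_le_of_fidelity {V d C : ℝ} (hp : Measurable p) (hq : Measurable q)
    (hp0 : 0 ≤ᵐ[μ] p) (hq0 : 0 ≤ᵐ[μ] q) (hp_int : Integrable p μ) (hq_int : Integrable q μ)
    (hq_one : ∫ x, q x ∂μ = 1) (hV : 0 ≤ V) (hd : 1 < d)
    (hfid : ∀ c : ℝ, 0 < c → ∫ x in {x | c * q x ≤ p x}, p x ∂μ ≤ V * c ^ (-d))
    (hC : 2 ≤ C) :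
    chiSqDiv μ p q
      ≤ ENNReal.ofReal ((C - 1) ^ 2 + V * 2 ^ d * C ^ (-(d - 1)) * ((2 : ℝ) ^ (d - 1) - 1)⁻¹) := by
  have htail_nonneg : 0 ≤ V * 2 ^ d * C ^ (-(d - 1)) * ((2 : ℝ) ^ (d - 1) - 1)⁻¹ := by
    have : 1 < (2 : ℝ) ^ (d - 1) := Real.one_lt_rpow one_lt_two (by linarith)
    have : 0 ≤ C ^ (-(d - 1)) := Real.rpow_nonneg (by linarith) _
    have : 0 ≤ (2 : ℝ) ^ d := Real.rpow_nonneg zero_le_two _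
    have : 0 ≤ ((2 : ℝ) ^ (d - 1) - 1)⁻¹ := inv_nonneg.2 (by linarith)
    positivity
  rw [chiSqDiv, ← lintegral_add_compl _ (measurableSet_le (hq.const_mul C) hp),
    ENNReal.ofReal_add (sq_nonneg _) htail_nonneg, add_comm (ENNReal.ofReal _)]
  gcongr
  · exact setLIntegral_chiSqIntegrand_le_of_fidelity hp hp0 hp_int hV hd hfid hC
  · exact setLIntegral_chiSqIntegrand_le_of_le hp0 hq hq0 hq_int hq_one hC _
      fun x (hx : ¬C * q x ≤ p x) => (not_le.1 hx).le

end Fidelity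

theorem stmt10_general
    {k : ℕ} (𝒳 : Set (Fin k → ℝ)) (h𝒳 : MeasurableSet 𝒳)
    (p pt : (Fin k → ℝ) → ℝ)
    (hp_meas : Measurable p) (hpt_meas : Measurable pt)
    (hp_nonneg : ∀ x ∈ 𝒳, 0 ≤ p x) (hpt_nonneg : ∀ x ∈ 𝒳, 0 ≤ pt x)
    (hp_int : IntegrableOn p 𝒳) (hpt_int : IntegrableOn pt 𝒳)
    (hp_one : (∫ x in 𝒳, p x) = 1) (hpt_one : (∫ x in 𝒳, pt x) = 1)
    (V d : ℝ) (hV : 0 ≤ V) (hd : 1 < d)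
    -- (V, d)-fidelity level
    (hfid : ∀ C : ℝ, 0 < C →
      (∫ x in {x ∈ 𝒳 | C * pt x ≤ p x}, p x) ≤ V * C ^ (-d) ∧
      (∫ x in {x ∈ 𝒳 | C * p x ≤ pt x}, pt x) ≤ V * C ^ (-d)) :
    ∀ C : ℝ, 2 ≤ C →
      max (∫⁻ x in 𝒳, ENNReal.ofReal (pt x * (p x / pt x - 1) ^ 2))
          (∫⁻ x in 𝒳, ENNReal.ofReal (p x * (pt x / p x - 1) ^ 2))
        ≤ ENNReal.ofReal
            ((C - 1) ^ 2 + V * 2 ^ d * C ^ (-(d - 1)) * ((2 : ℝ) ^ (d - 1) - 1)⁻¹) := by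
  intro C hC
  have restrict_sep : ∀ (f g : (Fin k → ℝ) → ℝ) (c : ℝ), Measurable f → Measurable g →
      ∫ x in {x | c * g x ≤ f x}, f x ∂volume.restrict 𝒳 = ∫ x in {x ∈ 𝒳 | c * g x ≤ f x}, f x :=
    fun f g c hf hg => by
      rw [Measure.restrict_restrict (measurableSet_le (by fun_prop) hf), Set.inter_comm,
        Set.inter_ofPred_eq_sep]
  have hp0 : 0 ≤ᵐ[volume.restrict 𝒳] p := ae_restrict_of_forall_mem h𝒳 hp_nonneg
  have hpt0 : 0 ≤ᵐ[volume.restrict 𝒳] pt := ae_restrict_of_forall_mem h𝒳 hpt_nonneg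
  refine max_le ?_ ?_
  · refine chiSqDiv_le_of_fidelity hp_meas hpt_meas hp0 hpt0 hp_int hpt_int hpt_one hV hd
      (fun c hc => ?_) hC
    rw [restrict_sep _ _ _ hp_meas hpt_meas]; exact (hfid c hc).1
  · refine chiSqDiv_le_of_fidelity hpt_meas hp_meas hpt0 hp0 hpt_int hp_int hp_one hV hd
      (fun c hc => ?_) hC
    rw [restrict_sep _ _ _ hpt_meas hp_meas]; exact (hfid c hc).2

/-- **(V, d)-fidelity with d > 1 gives a χ²-divergence bound (Lemma S1, part 3,
converse direction).**  If `p`, `p̃` satisfy the `(V, d)`-fidelity level with `d > 1`,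
then for every `C ≥ 2`,
`max{χ²(P ‖ P̃), χ²(P̃ ‖ P)} ≤ (C − 1)² + V·2^d·C^{−(d−1)}·(2^{d−1} − 1)⁻¹`.
The (possibly infinite) χ²-divergences are expressed as lower Lebesgue integrals. -/
theorem stmt10
    {k : ℕ} (𝒳 : Set (Fin k → ℝ)) (h𝒳 : MeasurableSet 𝒳)
    (p pt : (Fin k → ℝ) → ℝ)
    (hp_meas : Measurable p) (hpt_meas : Measurable pt)
    (hp_nonneg : ∀ x ∈ 𝒳, 0 ≤ p x) (hpt_nonneg : ∀ x ∈ 𝒳, 0 ≤ pt x)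
    (hp_int : IntegrableOn p 𝒳) (hpt_int : IntegrableOn pt 𝒳)
    (hp_one : (∫ x in 𝒳, p x) = 1) (hpt_one : (∫ x in 𝒳, pt x) = 1)
    -- each density is strictly positive wherever the other one is positive
    (hpos : ∀ x ∈ 𝒳, (0 < p x → 0 < pt x) ∧ (0 < pt x → 0 < p x))
    (V d : ℝ) (hV : 0 ≤ V) (hd : 1 < d)
    -- (V, d)-fidelity level
    (hfid : ∀ C : ℝ, 0 < C →
      (∫ x in {x ∈ 𝒳 | C * pt x ≤ p x}, p x) ≤ V * C ^ (-d) ∧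
      (∫ x in {x ∈ 𝒳 | C * p x ≤ pt x}, pt x) ≤ V * C ^ (-d)) :
    ∀ C : ℝ, 2 ≤ C →
      max (∫⁻ x in 𝒳, ENNReal.ofReal (pt x * (p x / pt x - 1) ^ 2))
          (∫⁻ x in 𝒳, ENNReal.ofReal (p x * (pt x / p x - 1) ^ 2))
        ≤ ENNReal.ofReal
            ((C - 1) ^ 2 + V * 2 ^ d * C ^ (-(d - 1)) * ((2 : ℝ) ^ (d - 1) - 1)⁻¹) :=
  stmt10_general 𝒳 h𝒳 p pt hp_meas hpt_meas hp_nonneg hpt_nonneg hp_int hpt_int hp_one hpt_one V d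
    hV hd hfid
end

section
/- Fidelity transfer lemma for bounded integrands (the key inequality behind (Inequ:U1) and (UBG0) in the proof of Theorem 4). Let P and Q be probability measures on 𝒳 ⊆ ℝ^p with densities p and q satisfying the (V, d)-fidelity level (0 < d < ∞), and let h : 𝒳 → [0, B] be measurable with B ≥ 0. Then (i) for every C > 0, ∫ h dP ≤ C·∫ h dQ + B·V·C^{−d}; and consequently (ii) ∫ h dP ≤ (d^{1/(d+1)} + d^{−d/(d+1)})·(B·V)^{1/(d+1)}·(∫ h dQ)^{d/(d+1)}. -/
/-!
On the set where `p ≥ C q` the integrand `h p` is at most `B p`, and the fidelity level bounds the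
`P`-mass of that set by `V C^{-d}`; off it, `h p ≤ C h q`. This gives (i), and (ii) follows by
minimising `C I + B V C^{-d}` over `C > 0`, where `I = ∫ h dQ`: the minimum is attained at
`C = (d B V / I)^{1/(d+1)}`.
-/

open MeasureTheory Filter Topology Set

theorem nonpos_of_forall_le_mul_add_mul_rpow_neg {a I K d : ℝ} (hd : 0 < d) (hIK : I * K = 0)
    (h : ∀ C, 0 < C → a ≤ C * I + K * C ^ (-d)) : a ≤ 0 := by
  rcases mul_eq_zero.1 hIK with rfl | rfl
  · have hlim : Tendsto (fun C : ℝ => C * 0 + K * C ^ (-d)) atTop (𝓝 0) := by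
      simpa using (tendsto_rpow_neg_atTop hd).const_mul K
    exact ge_of_tendsto hlim ((eventually_gt_atTop 0).mono h)
  · have hlim : Tendsto (fun C : ℝ => C * I + 0 * C ^ (-d)) (𝓝[>] 0) (𝓝 0) := by
      simpa using ((continuous_mul_const I).tendsto' 0 0 (zero_mul I)).mono_left nhdsWithin_le_nhds
    exact ge_of_tendsto hlim (eventually_nhdsWithin_of_forall h)

theorem le_of_forall_le_mul_add_mul_rpow_neg {a I K d : ℝ} (hI : 0 ≤ I) (hK : 0 ≤ K) (hd : 0 < d)
    (h : ∀ C, 0 < C → a ≤ C * I + K * C ^ (-d)) :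
    a ≤ (d ^ (1 / (d + 1)) + d ^ (-(d / (d + 1)))) * K ^ (1 / (d + 1)) * I ^ (d / (d + 1)) := by
  have hd1 : 0 < d + 1 := by linarith
  rcases hI.eq_or_lt with rfl | hI
  · rw [Real.zero_rpow (by positivity), mul_zero]
    exact nonpos_of_forall_le_mul_add_mul_rpow_neg hd (zero_mul K) h
  rcases hK.eq_or_lt with rfl | hK
  · rw [Real.zero_rpow (by positivity), mul_zero, zero_mul]
    exact nonpos_of_forall_le_mul_add_mul_rpow_neg hd (mul_zero I) h
  have hβ : d / (d + 1) = 1 - 1 / (d + 1) := by field_simp; ring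
  have hα : 1 / (d + 1) = 1 - d / (d + 1) := by rw [hβ]; ring
  have hX : 0 < d * K / I := by positivity
  set C := (d * K / I) ^ (1 / (d + 1)) with hC
  have hCI : C * I = d ^ (1 / (d + 1)) * K ^ (1 / (d + 1)) * I ^ (d / (d + 1)) := by
    rw [hC, Real.div_rpow (by positivity) hI.le, Real.mul_rpow hd.le hK.le, hβ,
      Real.rpow_sub hI, Real.rpow_one]
    ring
  have hKC : K * C ^ (-d) = d ^ (-(d / (d + 1))) * K ^ (1 / (d + 1)) * I ^ (d / (d + 1)) := by
    have hCd : C ^ (-d) = (d * K / I) ^ (-(d / (d + 1))) := by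
      rw [hC, ← Real.rpow_mul hX.le]
      ring_nf
    rw [hCd, Real.rpow_neg hX.le, Real.rpow_neg hd.le, Real.div_rpow (by positivity) hI.le,
      Real.mul_rpow hd.le hK.le, hα, Real.rpow_sub hK, Real.rpow_one]
    field_simp
  calc a ≤ C * I + K * C ^ (-d) := h C (by positivity)
    _ = _ := by rw [hCI, hKC]; ring

section

variable {α : Type*} [MeasurableSpace α] {μ : Measure α} {s : Set α}

theorem MeasureTheory.IntegrableOn.mul_of_mem_Icc {f g : α → ℝ} {B : ℝ} (hs : MeasurableSet s)
    (hg : IntegrableOn g s μ) (hf : Measurable f) (hfB : ∀ x ∈ s, f x ∈ Icc 0 B) :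
    IntegrableOn (fun x => f x * g x) s μ :=
  hg.bdd_mul hf.aestronglyMeasurable <| (ae_restrict_mem hs).mono fun x hx =>
    (Real.norm_of_nonneg (hfB x hx).1).trans_le (hfB x hx).2

theorem setIntegral_mul_le_of_mem_Icc {p q h : α → ℝ} {B C : ℝ} (hs : MeasurableSet s)
    (hp : Measurable p) (hq : Measurable q) (hp_int : IntegrableOn p s μ)
    (hq_int : IntegrableOn q s μ) (hp_nonneg : ∀ x ∈ s, 0 ≤ p x) (hq_nonneg : ∀ x ∈ s, 0 ≤ q x)
    (hh : Measurable h) (hhB : ∀ x ∈ s, h x ∈ Icc 0 B) (hC : 0 ≤ C) :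
    ∫ x in s, h x * p x ∂μ ≤
      C * ∫ x in s, h x * q x ∂μ + B * ∫ x in {x ∈ s | C * q x ≤ p x}, p x ∂μ := by
  set A := {x | C * q x ≤ p x}
  have hA : MeasurableSet A := measurableSet_le (hq.const_mul C) hp
  have hpointwise : ∀ x ∈ s, h x * p x ≤ C * (h x * q x) + B * A.indicator p x := by
    intro x hx
    obtain ⟨h0, hB⟩ := hhB x hx
    by_cases hxA : x ∈ A
    · rw [indicator_of_mem hxA]
      have := mul_nonneg hC (mul_nonneg h0 (hq_nonneg x hx))
      nlinarith [hp_nonneg x hx]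
    · rw [indicator_of_notMem hxA, mul_zero, add_zero]
      have : p x ≤ C * q x := (not_le.1 hxA).le
      nlinarith
  have hhq_int := hq_int.mul_of_mem_Icc hs hh hhB
  have hA_int := hp_int.indicator hA
  calc ∫ x in s, h x * p x ∂μ
      ≤ ∫ x in s, C * (h x * q x) + B * A.indicator p x ∂μ :=
        setIntegral_mono_on (hp_int.mul_of_mem_Icc hs hh hhB)
          ((hhq_int.const_mul C).add (hA_int.const_mul B)) hs hpointwise
    _ = C * ∫ x in s, h x * q x ∂μ + B * ∫ x in {x ∈ s | C * q x ≤ p x}, p x ∂μ := by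
        rw [integral_add (hhq_int.const_mul C) (hA_int.const_mul B), integral_const_mul,
          integral_const_mul, setIntegral_indicator hA]
        rfl

end

theorem stmt11_general
    {k : ℕ} (𝒳 : Set (Fin k → ℝ)) (h𝒳 : MeasurableSet 𝒳)
    (p q : (Fin k → ℝ) → ℝ)
    (hp_meas : Measurable p) (hq_meas : Measurable q)
    (hp_nonneg : ∀ x ∈ 𝒳, 0 ≤ p x) (hq_nonneg : ∀ x ∈ 𝒳, 0 ≤ q x)
    (hp_int : IntegrableOn p 𝒳) (hq_int : IntegrableOn q 𝒳)
    (V d : ℝ) (hV : 0 ≤ V) (hd : 0 < d)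
    -- (V, d)-fidelity level
    (hfid : ∀ C : ℝ, 0 < C →
      (∫ x in {x ∈ 𝒳 | C * q x ≤ p x}, p x) ≤ V * C ^ (-d) ∧
      (∫ x in {x ∈ 𝒳 | C * p x ≤ q x}, q x) ≤ V * C ^ (-d))
    (B : ℝ) (hB : 0 ≤ B)
    (h : (Fin k → ℝ) → ℝ) (hh : Measurable h)
    (hrange : ∀ x ∈ 𝒳, h x ∈ Set.Icc 0 B) :
    (∀ C : ℝ, 0 < C →
        (∫ x in 𝒳, h x * p x) ≤ C * (∫ x in 𝒳, h x * q x) + B * V * C ^ (-d)) ∧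
      (∫ x in 𝒳, h x * p x) ≤
        (d ^ (1 / (d + 1)) + d ^ (-(d / (d + 1)))) * (B * V) ^ (1 / (d + 1))
          * (∫ x in 𝒳, h x * q x) ^ (d / (d + 1)) := by
  have htransfer : ∀ C : ℝ, 0 < C →
      (∫ x in 𝒳, h x * p x) ≤ C * (∫ x in 𝒳, h x * q x) + B * V * C ^ (-d) := fun C hC =>
    (setIntegral_mul_le_of_mem_Icc h𝒳 hp_meas hq_meas hp_int hq_int hp_nonneg hq_nonneg hh
      hrange hC.le).trans <| by
        rw [mul_assoc B]
        gcongr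
        exact (hfid C hC).1
  have hQ_nonneg : 0 ≤ ∫ x in 𝒳, h x * q x :=
    setIntegral_nonneg h𝒳 fun x hx => mul_nonneg (hrange x hx).1 (hq_nonneg x hx)
  exact ⟨htransfer, le_of_forall_le_mul_add_mul_rpow_neg hQ_nonneg (mul_nonneg hB hV) hd htransfer⟩

/-- **Fidelity transfer lemma for bounded integrands** (the key inequality behind
(Inequ:U1) and (UBG0) in the proof of Theorem 4).  `p` and `q` are probability
densities on `𝒳` satisfying the `(V, d)`-fidelity level, and `h : 𝒳 → [0, B]` is
measurable.  Then (i) `∫ h dP ≤ C ∫ h dQ + B V C^{−d}` for every `C > 0`, and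
(ii) `∫ h dP ≤ (d^{1/(d+1)} + d^{−d/(d+1)}) (B V)^{1/(d+1)} (∫ h dQ)^{d/(d+1)}`. -/
theorem stmt11
    {k : ℕ} (𝒳 : Set (Fin k → ℝ)) (h𝒳 : MeasurableSet 𝒳)
    (p q : (Fin k → ℝ) → ℝ)
    (hp_meas : Measurable p) (hq_meas : Measurable q)
    (hp_nonneg : ∀ x ∈ 𝒳, 0 ≤ p x) (hq_nonneg : ∀ x ∈ 𝒳, 0 ≤ q x)
    (hp_int : IntegrableOn p 𝒳) (hq_int : IntegrableOn q 𝒳)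
    (hp_one : (∫ x in 𝒳, p x) = 1) (hq_one : (∫ x in 𝒳, q x) = 1)
    (V d : ℝ) (hV : 0 ≤ V) (hd : 0 < d)
    -- (V, d)-fidelity level
    (hfid : ∀ C : ℝ, 0 < C →
      (∫ x in {x ∈ 𝒳 | C * q x ≤ p x}, p x) ≤ V * C ^ (-d) ∧
      (∫ x in {x ∈ 𝒳 | C * p x ≤ q x}, q x) ≤ V * C ^ (-d))
    (B : ℝ) (hB : 0 ≤ B)
    (h : (Fin k → ℝ) → ℝ) (hh : Measurable h)
    (hrange : ∀ x ∈ 𝒳, h x ∈ Set.Icc 0 B) :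
    (∀ C : ℝ, 0 < C →
        (∫ x in 𝒳, h x * p x) ≤ C * (∫ x in 𝒳, h x * q x) + B * V * C ^ (-d)) ∧
      (∫ x in 𝒳, h x * p x) ≤
        (d ^ (1 / (d + 1)) + d ^ (-(d / (d + 1)))) * (B * V) ^ (1 / (d + 1))
          * (∫ x in 𝒳, h x * q x) ^ (d / (d + 1)) :=
  stmt11_general 𝒳 h𝒳 p q hp_meas hq_meas hp_nonneg hq_nonneg hp_int hq_int V d hV hd hfid B hB h hh
    hrange
end

section
/- Excess-risk bound for the synthetic regression minimizer (inequality (Ineq:final) in the proof of Theorem 4). Assume p_X and p_X̃ satisfy the (V, d)-fidelity level with 0 < d < ∞. Let μ, μ̂ : 𝒳 → ℝ be measurable with ‖μ − μ̂‖_{L²(P_X)} < ∞, and let F₂ be a set of measurable functions such that |f(x) − μ̂(x)| ≤ U for all f ∈ F₂ and all x ∈ 𝒳, for a constant U ≥ 0. Let f* ∈ F₂ minimize Φ_s(f) = ∫ (f − μ)² p_X over F₂ and let f̃* ∈ F₂ minimize Φ̃_s(f) = ∫ (f − μ̂)² p_X̃ over F₂. Then √(Φ_s(f̃*)) ≤ ‖μ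 − μ̂‖_{L²(P_X)} + C_{d,V,U}·( ‖μ̂ − μ‖_{L²(P_X)} + √(Φ_s(f*)) )^{d²/(d+1)²}, where C_{d,V,U} = (d^{1/(d+1)} + d^{−d/(d+1)})^{(3d+1)/(2(d+1))}·V^{(2d+1)/(2(d+1)²)}·U^{(2d+1)/(d+1)²}. -/
/-!
Write `κ = d^{1/(d+1)} + d^{-d/(d+1)}`, `M = U²V` and `T = ‖μ − μ̂‖ + √Φ_s(f*)`, norms in
`L²(P_X)`. By the triangle inequality, `√Φ_s(f̃*) ≤ ‖μ − μ̂‖ + ‖f̃* − μ̂‖` and `‖f* − μ̂‖ ≤ T`.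
If `0 ≤ g ≤ U²` and `p, q` are the two densities in either order, splitting `𝒳` along
`{p ≥ C q}` and using the fidelity level gives `∫ g p ≤ C ∫ g q + U² V C^{-d}` for every `C > 0`;
optimizing in `C` gives `∫ g p ≤ κ (∫ g q)^{d/(d+1)} M^{1/(d+1)}`. Transferring `(f* − μ̂)²` from
`P_X` to `P_X̃`, using that `f̃*` minimizes `Φ̃_s`, and transferring `(f̃* − μ̂)²` back to `P_X`
bounds `‖f̃* − μ̂‖²` by `κ^{(2d+1)/(d+1)} M^{(2d+1)/(d+1)²} T^{2d²/(d+1)²}`; take square roots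
and use `κ ≥ 1`.
-/

open MeasureTheory Filter

lemma sq_add_le_div_add_div (u v : ℝ) {l : ℝ} (hl₀ : 0 < l) (hl₁ : l < 1) :
    (u + v) ^ 2 ≤ u ^ 2 / l + v ^ 2 / (1 - l) := by
  have hl₁' : 0 < 1 - l := by linarith
  have key : u ^ 2 / l + v ^ 2 / (1 - l) - (u + v) ^ 2 =
      ((1 - l) * u - l * v) ^ 2 / (l * (1 - l)) := by
    field_simp
    ring
  rw [← sub_nonneg, key]
  positivity

lemma sqrt_le_sqrt_add_sqrt_of_forall {I a b : ℝ} (ha : 0 ≤ a) (hb : 0 ≤ b)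
    (h : ∀ l, 0 < l → l < 1 → I ≤ a / l + b / (1 - l)) : √I ≤ √a + √b := by
  refine le_of_forall_pos_le_add fun ε hε => ?_
  set x := √a + ε / 2
  set y := √b + ε / 2
  have hx : 0 < x := by positivity
  have hy : 0 < y := by positivity
  have hax : a / x ≤ x := by
    rw [div_le_iff₀ hx, ← sq, ← Real.sq_sqrt ha]
    gcongr
    exact le_add_of_nonneg_right (by positivity)
  have hby : b / y ≤ y := by
    rw [div_le_iff₀ hy, ← sq, ← Real.sq_sqrt hb]
    gcongr
    exact le_add_of_nonneg_right (by positivity)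
  have hl : 1 - x / (x + y) = y / (x + y) := by field_simp; ring
  have hI := h (x / (x + y)) (by positivity) (by rw [div_lt_one (by positivity)]; linarith)
  rw [hl, div_div_eq_mul_div, div_div_eq_mul_div, mul_div_right_comm, mul_div_right_comm b] at hI
  calc √I ≤ √((x + y) ^ 2) := by
        gcongr
        nlinarith
    _ = √a + √b + ε := by rw [Real.sqrt_sq (by positivity)]; ring

/-- The minimum of `t + t ^ (-d)` over `t > 0`, attained at `t = d ^ (1 / (d + 1))`. -/
noncomputable def tradeoffConst (d : ℝ) : ℝ := d ^ (1 / (d + 1)) + d ^ (-(d / (d + 1)))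

lemma tradeoffConst_nonneg {d : ℝ} (hd : 0 ≤ d) : 0 ≤ tradeoffConst d := by
  unfold tradeoffConst; positivity

lemma one_le_tradeoffConst {d : ℝ} (hd : 0 < d) : 1 ≤ tradeoffConst d := by
  have h₁ : 0 ≤ d ^ (1 / (d + 1)) := by positivity
  have h₂ : 0 ≤ d ^ (-(d / (d + 1))) := by positivity
  rcases le_or_gt 1 d with hd₁ | hd₁
  · have := Real.one_le_rpow hd₁ (by positivity : 0 ≤ 1 / (d + 1))
    unfold tradeoffConst; linarith
  · have := Real.one_le_rpow_of_pos_of_le_one_of_nonpos hd hd₁.le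
      (neg_nonpos.2 (by positivity : 0 ≤ d / (d + 1)))
    unfold tradeoffConst; linarith

lemma mul_add_mul_rpow_neg_eq {d s M t : ℝ} (hd : 0 < d) (hs : 0 < s) (hM : 0 < M)
    (ht : 0 < t) :
    t * (M / s) ^ (1 / (d + 1)) * s + M * (t * (M / s) ^ (1 / (d + 1))) ^ (-d) =
      (t + t ^ (-d)) * (s ^ (d / (d + 1)) * M ^ (1 / (d + 1))) := by
  have hMs : 0 < M / s := by positivity
  set q := (M / s) ^ (1 / (d + 1)) with hq
  have hbalance : M * q ^ (-d) = q * s := by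
    have hsplit : q = M / s * (M / s) ^ (1 / (d + 1) * -d) := by
      have hexp : 1 + 1 / (d + 1) * -d = 1 / (d + 1) := by field_simp; ring
      rw [← Real.rpow_one_add' hMs.le (by rw [hexp]; positivity), hexp]
    calc M * q ^ (-d) = M * (M / s) ^ (1 / (d + 1) * -d) := by rw [hq, ← Real.rpow_mul hMs.le]
      _ = q * s := by rw [hsplit]; field_simp
  have hqs : q * s = s ^ (d / (d + 1)) * M ^ (1 / (d + 1)) := by
    rw [hq, Real.div_rpow hM.le hs.le, show d / (d + 1) = 1 - 1 / (d + 1) by field_simp; ring,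
      Real.rpow_sub hs, Real.rpow_one]
    ring
  rw [Real.mul_rpow ht.le (by positivity), ← hqs]
  linear_combination t ^ (-d) * hbalance

lemma le_tradeoffConst_mul_of_forall {d s M X : ℝ} (hd : 0 < d) (hs : 0 ≤ s) (hM : 0 ≤ M)
    (h : ∀ C, 0 < C → X ≤ C * s + M * C ^ (-d)) :
    X ≤ tradeoffConst d * s ^ (d / (d + 1)) * M ^ (1 / (d + 1)) := by
  have hrhs : 0 ≤ tradeoffConst d * s ^ (d / (d + 1)) * M ^ (1 / (d + 1)) := by
    have := tradeoffConst_nonneg hd.le; positivity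
  rcases hs.eq_or_lt with rfl | hs
  · refine le_trans (ge_of_tendsto ?_ ((eventually_gt_atTop 0).mono h)) hrhs
    simpa using (tendsto_rpow_neg_atTop hd).const_mul M
  rcases hM.eq_or_lt with rfl | hM
  · refine le_trans (ge_of_tendsto ?_
      (eventually_nhdsWithin_of_forall (s := Set.Ioi (0 : ℝ)) (a := 0) h)) hrhs
    simpa using (tendsto_id.mul_const s).mono_left (nhdsWithin_le_nhds (a := (0 : ℝ)))
  have ht : 0 < d ^ (1 / (d + 1)) := by positivity
  have h' := h _ (mul_pos ht (by positivity : 0 < (M / s) ^ (1 / (d + 1))))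
  rw [mul_add_mul_rpow_neg_eq hd hs hM ht, ← Real.rpow_mul hd.le,
    show 1 / (d + 1) * -d = -(d / (d + 1)) by ring] at h'
  simpa only [tradeoffConst, mul_assoc] using h'

lemma sqrt_le_of_le_mul_rpow_twice {d κ M T X Y E : ℝ} (hd : 0 < d) (hκ : 1 ≤ κ) (hM : 0 ≤ M)
    (hT : 0 ≤ T) (hX₀ : 0 ≤ X) (hY₀ : 0 ≤ Y) (hX : X ≤ T ^ 2)
    (hY : Y ≤ κ * X ^ (d / (d + 1)) * M ^ (1 / (d + 1)))
    (hE : E ≤ κ * Y ^ (d / (d + 1)) * M ^ (1 / (d + 1))) :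
    √E ≤ κ ^ ((3 * d + 1) / (2 * (d + 1))) * M ^ ((2 * d + 1) / (2 * (d + 1) ^ 2))
      * T ^ (d ^ 2 / (d + 1) ^ 2) := by
  have hκ₀ : 0 ≤ κ := zero_le_one.trans hκ
  set a := d / (d + 1)
  set b := 1 / (d + 1)
  have hsq : κ * (κ * (T ^ 2) ^ a * M ^ b) ^ a * M ^ b =
      (κ ^ ((2 * d + 1) / (2 * (d + 1))) * M ^ ((2 * d + 1) / (2 * (d + 1) ^ 2))
        * T ^ (d ^ 2 / (d + 1) ^ 2)) ^ 2 := by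
    rw [Real.mul_rpow (by positivity) (by positivity), Real.mul_rpow hκ₀ (by positivity),
      ← Real.rpow_mul (by positivity), ← Real.rpow_mul hM, mul_pow, mul_pow,
      ← Real.rpow_mul_natCast hκ₀, ← Real.rpow_mul_natCast hM, ← Real.rpow_mul_natCast hT,
      ← Real.rpow_natCast_mul hT]
    have e₁ : κ * κ ^ a = κ ^ ((2 * d + 1) / (2 * (d + 1)) * (2 : ℕ)) := by
      rw [← Real.rpow_one_add' hκ₀ (by positivity)]
      congr 1; simp only [a]; field_simp; push_cast; ring
    have e₂ : M ^ (b * a) * M ^ b = M ^ ((2 * d + 1) / (2 * (d + 1) ^ 2) * (2 : ℕ)) := by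
      rw [← Real.rpow_add' hM (by positivity)]
      congr 1; simp only [a, b]; field_simp; push_cast; ring
    have e₃ : ((2 : ℕ) : ℝ) * (a * a) = d ^ 2 / (d + 1) ^ 2 * (2 : ℕ) := by
      simp only [a]; field_simp
    rw [e₃, ← e₁, ← e₂]
    ring
  have hY' : Y ≤ κ * (T ^ 2) ^ a * M ^ b := hY.trans (by gcongr)
  calc √E ≤ √(κ * (κ * (T ^ 2) ^ a * M ^ b) ^ a * M ^ b) := by
        gcongr; exact hE.trans (by gcongr)
    _ = κ ^ ((2 * d + 1) / (2 * (d + 1))) * M ^ ((2 * d + 1) / (2 * (d + 1) ^ 2))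
        * T ^ (d ^ 2 / (d + 1) ^ 2) := by rw [hsq, Real.sqrt_sq (by positivity)]
    _ ≤ _ := by gcongr; norm_num

section Integrals

variable {α : Type*} [MeasurableSpace α] {μ : Measure α} {s : Set α}

lemma sqrt_setIntegral_sub_sq_mul_le (hs : MeasurableSet s) {f g h w : α → ℝ}
    (hw : ∀ x ∈ s, 0 ≤ w x)
    (hfg : IntegrableOn (fun x => (f x - g x) ^ 2 * w x) s μ)
    (hgh : IntegrableOn (fun x => (g x - h x) ^ 2 * w x) s μ) :
    √(∫ x in s, (f x - h x) ^ 2 * w x ∂μ) ≤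
      √(∫ x in s, (f x - g x) ^ 2 * w x ∂μ) + √(∫ x in s, (g x - h x) ^ 2 * w x ∂μ) := by
  by_cases hfh : IntegrableOn (fun x => (f x - h x) ^ 2 * w x) s μ
  swap
  · rw [integral_undef hfh, Real.sqrt_zero]; positivity
  have hnonneg {u : α → ℝ} : 0 ≤ ∫ x in s, u x ^ 2 * w x ∂μ :=
    setIntegral_nonneg hs fun x hx => mul_nonneg (sq_nonneg _) (hw x hx)
  refine sqrt_le_sqrt_add_sqrt_of_forall hnonneg hnonneg fun l hl₀ hl₁ => ?_
  rw [← integral_div, ← integral_div, ← integral_add (hfg.div_const _) (hgh.div_const _)]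
  refine setIntegral_mono_on hfh ((hfg.div_const _).add (hgh.div_const _)) hs fun x hx => ?_
  have := mul_le_mul_of_nonneg_right
    (sq_add_le_div_add_div (f x - g x) (g x - h x) hl₀ hl₁) (hw x hx)
  rwa [sub_add_sub_cancel, add_mul, div_mul_eq_mul_div, div_mul_eq_mul_div] at this

lemma integrableOn_sub_sq_mul (hs : MeasurableSet s) {f g h w : α → ℝ}
    (hf : AEStronglyMeasurable f (μ.restrict s)) (hh : AEStronglyMeasurable h (μ.restrict s))
    (hw : Measurable w) (hw₀ : ∀ x ∈ s, 0 ≤ w x)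
    (hfg : IntegrableOn (fun x => (f x - g x) ^ 2 * w x) s μ)
    (hgh : IntegrableOn (fun x => (g x - h x) ^ 2 * w x) s μ) :
    IntegrableOn (fun x => (f x - h x) ^ 2 * w x) s μ := by
  refine ((hfg.add hgh).const_mul 2).mono' (((hf.sub hh).pow 2).mul hw.aestronglyMeasurable)
    (ae_restrict_of_forall_mem hs fun x hx => ?_)
  rw [Real.norm_of_nonneg (mul_nonneg (sq_nonneg _) (hw₀ x hx))]
  show _ ≤ 2 * ((f x - g x) ^ 2 * w x + (g x - h x) ^ 2 * w x)
  have : (f x - h x) ^ 2 ≤ 2 * ((f x - g x) ^ 2 + (g x - h x) ^ 2) := by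
    nlinarith [sq_nonneg (f x - 2 * g x + h x)]
  nlinarith [mul_le_mul_of_nonneg_right this (hw₀ x hx)]

lemma integrableOn_mul_of_abs_le (hs : MeasurableSet s) {g w : α → ℝ} {G : ℝ}
    (hg : AEStronglyMeasurable g (μ.restrict s)) (hgG : ∀ x ∈ s, |g x| ≤ G)
    (hw : IntegrableOn w s μ) : IntegrableOn (fun x => g x * w x) s μ :=
  hw.bdd_mul hg (ae_restrict_of_forall_mem hs hgG)

lemma setIntegral_mul_le_of_superlevel (hs : MeasurableSet s) {g w₁ w₂ : α → ℝ} {G C R : ℝ}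
    (hg : Measurable g) (hw₁ : Measurable w₁) (hw₂ : Measurable w₂)
    (hg₀ : ∀ x ∈ s, 0 ≤ g x) (hgG : ∀ x ∈ s, g x ≤ G) (hG : 0 ≤ G) (hw₂₀ : ∀ x ∈ s, 0 ≤ w₂ x)
    (hw₁i : IntegrableOn w₁ s μ) (hw₂i : IntegrableOn w₂ s μ) (hC : 0 < C)
    (hR : ∫ x in {x ∈ s | C * w₂ x ≤ w₁ x}, w₁ x ∂μ ≤ R) :
    ∫ x in s, g x * w₁ x ∂μ ≤ C * ∫ x in s, g x * w₂ x ∂μ + G * R := by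
  have hgabs : ∀ x ∈ s, |g x| ≤ G := fun x hx => (abs_of_nonneg (hg₀ x hx)).trans_le (hgG x hx)
  have hgw₁ := integrableOn_mul_of_abs_le hs hg.aestronglyMeasurable hgabs hw₁i
  have hgw₂ := integrableOn_mul_of_abs_le hs hg.aestronglyMeasurable hgabs hw₂i
  set T := {x | C * w₂ x ≤ w₁ x}
  have hT : MeasurableSet T := measurableSet_le (hw₂.const_mul C) hw₁
  have hsup : ∫ x in s ∩ T, g x * w₁ x ∂μ ≤ G * R := calc
    ∫ x in s ∩ T, g x * w₁ x ∂μ ≤ ∫ x in s ∩ T, G * w₁ x ∂μ :=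
      setIntegral_mono_on (hgw₁.mono_set Set.inter_subset_left)
        ((hw₁i.mono_set Set.inter_subset_left).const_mul _) (hs.inter hT) fun x hx =>
        mul_le_mul_of_nonneg_right (hgG x hx.1) ((mul_nonneg hC.le (hw₂₀ x hx.1)).trans hx.2)
    _ = G * ∫ x in s ∩ T, w₁ x ∂μ := integral_const_mul _ _
    _ ≤ G * R := mul_le_mul_of_nonneg_left hR hG
  have hsub : ∫ x in s \ T, g x * w₁ x ∂μ ≤ C * ∫ x in s, g x * w₂ x ∂μ := calc
    ∫ x in s \ T, g x * w₁ x ∂μ ≤ ∫ x in s \ T, C * (g x * w₂ x) ∂μ :=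
      setIntegral_mono_on (hgw₁.mono_set Set.sdiff_subset)
        ((hgw₂.mono_set Set.sdiff_subset).const_mul _) (hs.diff hT) fun x hx => by
        nlinarith [mul_le_mul_of_nonneg_left (not_le.1 hx.2).le (hg₀ x hx.1)]
    _ = C * ∫ x in s \ T, g x * w₂ x ∂μ := integral_const_mul _ _
    _ ≤ C * ∫ x in s, g x * w₂ x ∂μ := mul_le_mul_of_nonneg_left (setIntegral_mono_set hgw₂
        (ae_restrict_of_forall_mem hs fun x hx => mul_nonneg (hg₀ x hx) (hw₂₀ x hx))
        Set.sdiff_subset.eventuallyLE) hC.le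
  rw [← integral_inter_add_sdiff hT hgw₁]
  linarith

lemma setIntegral_mul_le_tradeoffConst (hs : MeasurableSet s) {g w₁ w₂ : α → ℝ} {G V d : ℝ}
    (hd : 0 < d) (hg : Measurable g) (hw₁ : Measurable w₁) (hw₂ : Measurable w₂)
    (hg₀ : ∀ x ∈ s, 0 ≤ g x) (hgG : ∀ x ∈ s, g x ≤ G) (hG : 0 ≤ G) (hV : 0 ≤ V)
    (hw₂₀ : ∀ x ∈ s, 0 ≤ w₂ x) (hw₁i : IntegrableOn w₁ s μ) (hw₂i : IntegrableOn w₂ s μ)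
    (hfid : ∀ C, 0 < C → ∫ x in {x ∈ s | C * w₂ x ≤ w₁ x}, w₁ x ∂μ ≤ V * C ^ (-d)) :
    ∫ x in s, g x * w₁ x ∂μ ≤
      tradeoffConst d * (∫ x in s, g x * w₂ x ∂μ) ^ (d / (d + 1)) * (G * V) ^ (1 / (d + 1)) :=
  le_tradeoffConst_mul_of_forall hd
    (setIntegral_nonneg hs fun x hx => mul_nonneg (hg₀ x hx) (hw₂₀ x hx)) (mul_nonneg hG hV)
    fun C hC => (setIntegral_mul_le_of_superlevel hs hg hw₁ hw₂ hg₀ hgG hG hw₂₀ hw₁i hw₂i hC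
      (hfid C hC)).trans_eq (by ring)

lemma integrableOn_sub_sq_mul_of_abs_le (hs : MeasurableSet s) {f h w : α → ℝ} {U : ℝ}
    (hf : Measurable f) (hh : Measurable h) (hU : ∀ x ∈ s, |f x - h x| ≤ U)
    (hw : IntegrableOn w s μ) : IntegrableOn (fun x => (f x - h x) ^ 2 * w x) s μ :=
  integrableOn_mul_of_abs_le hs ((hf.sub hh).pow_const 2).aestronglyMeasurable
    (fun x hx => (abs_sq _).trans_le (sq_le_sq.2 ((hU x hx).trans (le_abs_self U)))) hw

lemma setIntegral_sub_sq_mul_le_tradeoffConst (hs : MeasurableSet s) {f h w₁ w₂ : α → ℝ}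
    {U V d : ℝ} (hd : 0 < d) (hf : Measurable f) (hh : Measurable h) (hw₁ : Measurable w₁)
    (hw₂ : Measurable w₂) (hU : ∀ x ∈ s, |f x - h x| ≤ U) (hV : 0 ≤ V)
    (hw₂₀ : ∀ x ∈ s, 0 ≤ w₂ x) (hw₁i : IntegrableOn w₁ s μ) (hw₂i : IntegrableOn w₂ s μ)
    (hfid : ∀ C, 0 < C → ∫ x in {x ∈ s | C * w₂ x ≤ w₁ x}, w₁ x ∂μ ≤ V * C ^ (-d)) :
    ∫ x in s, (f x - h x) ^ 2 * w₁ x ∂μ ≤ tradeoffConst d *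
      (∫ x in s, (f x - h x) ^ 2 * w₂ x ∂μ) ^ (d / (d + 1)) * (U ^ 2 * V) ^ (1 / (d + 1)) :=
  setIntegral_mul_le_tradeoffConst hs hd ((hf.sub hh).pow_const 2) hw₁ hw₂
    (fun _ _ => sq_nonneg _)
    (fun x hx => sq_le_sq.2 ((hU x hx).trans (le_abs_self U)))
    (sq_nonneg U) hV hw₂₀ hw₁i hw₂i hfid

end Integrals

theorem stmt12_general
    {k : ℕ} (𝒳 : Set (Fin k → ℝ)) (h𝒳 : MeasurableSet 𝒳)
    (pX pXt : (Fin k → ℝ) → ℝ)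
    (hpX_meas : Measurable pX) (hpXt_meas : Measurable pXt)
    (hpX_nonneg : ∀ x ∈ 𝒳, 0 ≤ pX x) (hpXt_nonneg : ∀ x ∈ 𝒳, 0 ≤ pXt x)
    (hpX_int : IntegrableOn pX 𝒳) (hpXt_int : IntegrableOn pXt 𝒳)
    (V d : ℝ) (hV : 0 ≤ V) (hd : 0 < d)
    -- (V, d)-fidelity level
    (hfid : ∀ C : ℝ, 0 < C →
      (∫ x in {x ∈ 𝒳 | C * pXt x ≤ pX x}, pX x) ≤ V * C ^ (-d) ∧
      (∫ x in {x ∈ 𝒳 | C * pX x ≤ pXt x}, pXt x) ≤ V * C ^ (-d))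
    (μ μhat : (Fin k → ℝ) → ℝ)
    (hμ : Measurable μ) (hμhat : Measurable μhat)
    -- ‖μ − μ̂‖_{L²(P_X)} < ∞
    (hμμhat : IntegrableOn (fun x => (μ x - μhat x) ^ 2 * pX x) 𝒳)
    (F2 : Set ((Fin k → ℝ) → ℝ)) (hF2 : ∀ f ∈ F2, Measurable f)
    (U : ℝ) (hU : 0 ≤ U)
    (hbdd : ∀ f ∈ F2, ∀ x ∈ 𝒳, |f x - μhat x| ≤ U)
    (fstar ftstar : (Fin k → ℝ) → ℝ)
    (hfstar : fstar ∈ F2) (hftstar : ftstar ∈ F2)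
    (hftstar_min : ∀ f ∈ F2,
      (∫ x in 𝒳, (ftstar x - μhat x) ^ 2 * pXt x) ≤ ∫ x in 𝒳, (f x - μhat x) ^ 2 * pXt x) :
    Real.sqrt (∫ x in 𝒳, (ftstar x - μ x) ^ 2 * pX x) ≤
      Real.sqrt (∫ x in 𝒳, (μ x - μhat x) ^ 2 * pX x)
        + ((d ^ (1 / (d + 1)) + d ^ (-(d / (d + 1)))) ^ ((3 * d + 1) / (2 * (d + 1)))
            * V ^ ((2 * d + 1) / (2 * (d + 1) ^ 2)) * U ^ ((2 * d + 1) / (d + 1) ^ 2))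
          * (Real.sqrt (∫ x in 𝒳, (μ x - μhat x) ^ 2 * pX x)
              + Real.sqrt (∫ x in 𝒳, (fstar x - μ x) ^ 2 * pX x))
            ^ (d ^ 2 / (d + 1) ^ 2) := by
  set A := ∫ x in 𝒳, (μ x - μhat x) ^ 2 * pX x
  have hflip : (fun x => (μhat x - μ x) ^ 2 * pX x) = fun x => (μ x - μhat x) ^ 2 * pX x := by
    ext x; ring
  have hfstar_T : ∫ x in 𝒳, (fstar x - μhat x) ^ 2 * pX x ≤
      (√A + √(∫ x in 𝒳, (fstar x - μ x) ^ 2 * pX x)) ^ 2 := by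
    have hfstarμ := integrableOn_sub_sq_mul h𝒳 (hF2 fstar hfstar).aestronglyMeasurable
      hμ.aestronglyMeasurable hpX_meas hpX_nonneg (integrableOn_sub_sq_mul_of_abs_le h𝒳
        (hF2 fstar hfstar) hμhat (hbdd fstar hfstar) hpX_int) (hflip ▸ hμμhat)
    refine (Real.sqrt_le_left (by positivity)).1 ?_
    linarith [sqrt_setIntegral_sub_sq_mul_le h𝒳 hpX_nonneg hfstarμ hμμhat]
  have hsynthetic := (hftstar_min fstar hfstar).trans <|
    setIntegral_sub_sq_mul_le_tradeoffConst h𝒳 hd (hF2 fstar hfstar) hμhat hpXt_meas hpX_meas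
      (hbdd fstar hfstar) hV hpX_nonneg hpXt_int hpX_int fun C hC => (hfid C hC).2
  have hback := setIntegral_sub_sq_mul_le_tradeoffConst h𝒳 hd (hF2 ftstar hftstar) hμhat
    hpX_meas hpXt_meas (hbdd ftstar hftstar) hV hpXt_nonneg hpX_int hpXt_int
    fun C hC => (hfid C hC).1
  have hmain := sqrt_le_of_le_mul_rpow_twice hd (one_le_tradeoffConst hd) (by positivity)
    (by positivity) (setIntegral_nonneg h𝒳 fun x hx => mul_nonneg (sq_nonneg _) (hpX_nonneg x hx))
    (setIntegral_nonneg h𝒳 fun x hx => mul_nonneg (sq_nonneg _) (hpXt_nonneg x hx))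
    hfstar_T hsynthetic hback
  have hM : (U ^ 2 * V) ^ ((2 * d + 1) / (2 * (d + 1) ^ 2)) =
      V ^ ((2 * d + 1) / (2 * (d + 1) ^ 2)) * U ^ ((2 * d + 1) / (d + 1) ^ 2) := by
    rw [mul_comm, Real.mul_rpow hV (sq_nonneg U), ← Real.rpow_natCast_mul hU]
    congr 2; push_cast; field_simp
  have htriangle := sqrt_setIntegral_sub_sq_mul_le h𝒳 hpX_nonneg (integrableOn_sub_sq_mul_of_abs_le
    h𝒳 (hF2 ftstar hftstar) hμhat (hbdd ftstar hftstar) hpX_int) (hflip ▸ hμμhat)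
  rw [hflip] at htriangle
  rw [hM, ← mul_assoc, tradeoffConst] at hmain
  linarith

/-- **Excess-risk bound for the synthetic regression minimizer** (inequality
(Ineq:final) in the proof of Theorem 4).  `p_X`, `p_X̃` satisfy the `(V, d)`-fidelity
level, `F₂` is a class of measurable functions with `|f − μ̂| ≤ U` on `𝒳`, `fstar`
minimizes `Φ_s(f) = ∫ (f − μ)² p_X` over `F₂` and `ftstar` minimizes
`Φ̃_s(f) = ∫ (f − μ̂)² p_X̃` over `F₂`.  Then
`√(Φ_s(f̃*)) ≤ ‖μ − μ̂‖ + C_{d,V,U} (‖μ̂ − μ‖ + √(Φ_s(f*)))^{d²/(d+1)²}`. -/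
theorem stmt12
    {k : ℕ} (𝒳 : Set (Fin k → ℝ)) (h𝒳 : MeasurableSet 𝒳)
    (pX pXt : (Fin k → ℝ) → ℝ)
    (hpX_meas : Measurable pX) (hpXt_meas : Measurable pXt)
    (hpX_nonneg : ∀ x ∈ 𝒳, 0 ≤ pX x) (hpXt_nonneg : ∀ x ∈ 𝒳, 0 ≤ pXt x)
    (hpX_int : IntegrableOn pX 𝒳) (hpXt_int : IntegrableOn pXt 𝒳)
    (hpX_one : (∫ x in 𝒳, pX x) = 1) (hpXt_one : (∫ x in 𝒳, pXt x) = 1)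
    (V d : ℝ) (hV : 0 ≤ V) (hd : 0 < d)
    -- (V, d)-fidelity level
    (hfid : ∀ C : ℝ, 0 < C →
      (∫ x in {x ∈ 𝒳 | C * pXt x ≤ pX x}, pX x) ≤ V * C ^ (-d) ∧
      (∫ x in {x ∈ 𝒳 | C * pX x ≤ pXt x}, pXt x) ≤ V * C ^ (-d))
    (μ μhat : (Fin k → ℝ) → ℝ)
    (hμ : Measurable μ) (hμhat : Measurable μhat)
    -- ‖μ − μ̂‖_{L²(P_X)} < ∞
    (hμμhat : IntegrableOn (fun x => (μ x - μhat x) ^ 2 * pX x) 𝒳)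
    (F2 : Set ((Fin k → ℝ) → ℝ)) (hF2 : ∀ f ∈ F2, Measurable f)
    (U : ℝ) (hU : 0 ≤ U)
    (hbdd : ∀ f ∈ F2, ∀ x ∈ 𝒳, |f x - μhat x| ≤ U)
    (fstar ftstar : (Fin k → ℝ) → ℝ)
    (hfstar : fstar ∈ F2) (hftstar : ftstar ∈ F2)
    (hfstar_min : ∀ f ∈ F2,
      (∫ x in 𝒳, (fstar x - μ x) ^ 2 * pX x) ≤ ∫ x in 𝒳, (f x - μ x) ^ 2 * pX x)
    (hftstar_min : ∀ f ∈ F2,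
      (∫ x in 𝒳, (ftstar x - μhat x) ^ 2 * pXt x) ≤ ∫ x in 𝒳, (f x - μhat x) ^ 2 * pXt x) :
    Real.sqrt (∫ x in 𝒳, (ftstar x - μ x) ^ 2 * pX x) ≤
      Real.sqrt (∫ x in 𝒳, (μ x - μhat x) ^ 2 * pX x)
        + ((d ^ (1 / (d + 1)) + d ^ (-(d / (d + 1)))) ^ ((3 * d + 1) / (2 * (d + 1)))
            * V ^ ((2 * d + 1) / (2 * (d + 1) ^ 2)) * U ^ ((2 * d + 1) / (d + 1) ^ 2))
          * (Real.sqrt (∫ x in 𝒳, (μ x - μhat x) ^ 2 * pX x)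
              + Real.sqrt (∫ x in 𝒳, (fstar x - μ x) ^ 2 * pX x))
            ^ (d ^ 2 / (d + 1) ^ 2) :=
  stmt12_general 𝒳 h𝒳 pX pXt hpX_meas hpXt_meas hpX_nonneg hpXt_nonneg hpX_int hpXt_int V d hV hd
    hfid μ μhat hμ hμhat hμμhat F2 hF2 U hU hbdd fstar ftstar hfstar hftstar hftstar_min
end

section
/- Excess-risk bound for the synthetic classification minimizer (key inequality in the proof of Theorem 4, classification part). Assume p_X and p_X̃ satisfy the (V, d)-fidelity level with 0 < d < ∞. Let η, η̂ : 𝒳 → [0,1] be measurable, and let G₂ be a set of measurable functions from 𝒳 to ℝ. Let g* ∈ G₂ minimize Φ_{0-1} over G₂ and let g̃* ∈ G₂ minimize Φ̃_{0-1} over G₂. Then Φ_{0-1}(g̃*) ≤ K_{d,V}·Φ_{0-1}(g*)^{d²/(d+1)²} + 4·K_{d,V}·‖η̂ − η‖_{L²(P_X)}^{d²/(d+1)²} + 4·‖η̂ − η‖_{L²(P_X)}, where K_{d,V} = (d^{1/(d+1)} + d^{−d/(d+1)})^{(2d+1)/(d+1)}·V^{(2d+1)/(d+1)²}. -/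
/-!
Write `ℓ_η(g) = 1{sign g ≠ sign (η - 1/2)} |2η - 1|`, so that `Φ(g) = ∫ ℓ_η(g) p_X` and
`Φ̃(g) = ∫ ℓ_η̂(g) p_X̃`. The loss `ℓ_η(g)` is `2`-Lipschitz in `η`, so by Cauchy–Schwarz
`Φ̂(g) = ∫ ℓ_η̂(g) p_X` is within `2‖η̂ - η‖_{L²(P_X)}` of `Φ(g)`. To change the density, split
along `{p ≥ C q}`: for `0 ≤ f ≤ 1` the fidelity level gives `∫ f p ≤ V C^{-d} + C ∫ f q`, and
optimising over `C` gives `∫ f p ≤ K₀ (∫ f q)^{d/(d+1)}` with `K₀ = fidelityConstant V d`. Hence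
`Φ(g̃*) ≈ Φ̂(g̃*) ≤ K₀ Φ̃(g̃*)^r ≤ K₀ Φ̃(g*)^r ≤ K₀ (K₀ Φ̂(g*)^r)^r ≈ K₀ (K₀ Φ(g*)^r)^r` with
`r = d/(d+1)`, and `K₀^{1+r} = K_{d,V}`.
-/

open MeasureTheory Topology

noncomputable def fidelityConstant (V d : ℝ) : ℝ :=
  (d ^ (1 / (d + 1)) + d ^ (-(d / (d + 1)))) * V ^ (1 / (d + 1))

lemma exists_pos_mul_rpow_neg_add_mul_eq {V B d : ℝ} (hd : 0 < d) (hV : 0 < V) (hB : 0 < B) :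
    ∃ C > 0, V * C ^ (-d) + C * B = fidelityConstant V d * B ^ (d / (d + 1)) := by
  refine ⟨(d * V / B) ^ (1 / (d + 1)), by positivity, ?_⟩
  have hr : ∀ x : ℝ, 0 < x → x ^ (d / (d + 1)) = x / x ^ (1 / (d + 1)) := fun x hx => by
    have hs : d / (d + 1) = 1 - 1 / (d + 1) := by field_simp; ring
    rw [hs, Real.rpow_one_sub' hx.le (by rw [← hs]; positivity)]
  rw [← Real.rpow_mul (by positivity), show 1 / (d + 1) * -d = -(d / (d + 1)) by ring,
    Real.rpow_neg (by positivity), Real.div_rpow (by positivity) hB.le,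
    Real.div_rpow (by positivity) hB.le, Real.mul_rpow hd.le hV.le, Real.mul_rpow hd.le hV.le,
    fidelityConstant, Real.rpow_neg hd.le, hr d hd, hr V hV, hr B hB]
  field_simp
  ring

lemma le_fidelityConstant_mul_rpow {a V B d : ℝ} (hd : 0 < d) (hV : 0 ≤ V) (hB : 0 ≤ B)
    (h : ∀ C : ℝ, 0 < C → a ≤ V * C ^ (-d) + C * B) :
    a ≤ fidelityConstant V d * B ^ (d / (d + 1)) := by
  -- The optimal `C` needs `V, B > 0`; perturb both by `ε` and let `ε → 0`.
  have hε : ∀ ε > 0, a ≤ fidelityConstant (V + ε) d * (B + ε) ^ (d / (d + 1)) := by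
    intro ε hε
    obtain ⟨C, hC, hCeq⟩ := exists_pos_mul_rpow_neg_add_mul_eq hd (by positivity : 0 < V + ε)
      (by positivity : 0 < B + ε)
    rw [← hCeq]
    have := h C hC
    nlinarith [Real.rpow_pos_of_pos hC (-d)]
  have hcont : ContinuousAt (fun ε => fidelityConstant (V + ε) d * (B + ε) ^ (d / (d + 1))) 0 := by
    unfold fidelityConstant
    fun_prop (disch := positivity)
  refine ge_of_tendsto (x := 𝓝[>] (0 : ℝ)) ?_ (eventually_nhdsWithin_of_forall hε)
  simpa using hcont.tendsto.mono_left nhdsWithin_le_nhds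

lemma fidelityConstant_nonneg {V d : ℝ} (hV : 0 ≤ V) (hd : 0 ≤ d) : 0 ≤ fidelityConstant V d := by
  unfold fidelityConstant
  positivity

lemma fidelityConstant_rpow_one_add {V d : ℝ} (hV : 0 ≤ V) (hd : 0 ≤ d) :
    fidelityConstant V d ^ (1 + d / (d + 1)) =
      (d ^ (1 / (d + 1)) + d ^ (-(d / (d + 1)))) ^ ((2 * d + 1) / (d + 1))
        * V ^ ((2 * d + 1) / (d + 1) ^ 2) := by
  have h : 1 + d / (d + 1) = (2 * d + 1) / (d + 1) := by field_simp; ring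
  rw [fidelityConstant, Real.mul_rpow (by positivity) (by positivity), ← Real.rpow_mul hV, h]
  congr 2
  field_simp

lemma mul_mul_rpow_rpow_le {K A S r : ℝ} (hK : 0 ≤ K) (hA : 0 ≤ A) (hS : 0 ≤ S) (hr0 : 0 ≤ r)
    (hr1 : r ≤ 1) :
    K * (K * (A + 2 * S) ^ r) ^ r ≤ K ^ (1 + r) * (A ^ (r * r) + 2 * S ^ (r * r)) := by
  have hrr : r * r ≤ 1 := by nlinarith
  rw [Real.mul_rpow hK (by positivity), ← Real.rpow_mul (by positivity), ← mul_assoc,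
    ← Real.rpow_one_add' hK (by positivity)]
  gcongr
  calc (A + 2 * S) ^ (r * r) ≤ A ^ (r * r) + (2 * S) ^ (r * r) :=
        Real.rpow_add_le_add_rpow hA (by positivity) (by positivity) hrr
    _ ≤ A ^ (r * r) + 2 * S ^ (r * r) := by
        rw [Real.mul_rpow zero_le_two hS]
        gcongr
        exact Real.rpow_le_self_of_one_le one_le_two hrr

lemma fidelityConstant_mul_mul_rpow_add_le {V d A S : ℝ} (hV : 0 ≤ V) (hd : 0 ≤ d) (hA : 0 ≤ A)
    (hS : 0 ≤ S) :
    fidelityConstant V d * (fidelityConstant V d * (A + 2 * S) ^ (d / (d + 1))) ^ (d / (d + 1))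
        + 2 * S ≤
      ((d ^ (1 / (d + 1)) + d ^ (-(d / (d + 1)))) ^ ((2 * d + 1) / (d + 1))
          * V ^ ((2 * d + 1) / (d + 1) ^ 2)) * A ^ (d ^ 2 / (d + 1) ^ 2)
        + 4 * ((d ^ (1 / (d + 1)) + d ^ (-(d / (d + 1)))) ^ ((2 * d + 1) / (d + 1))
            * V ^ ((2 * d + 1) / (d + 1) ^ 2)) * S ^ (d ^ 2 / (d + 1) ^ 2)
        + 4 * S := by
  have h := mul_mul_rpow_rpow_le (r := d / (d + 1)) (fidelityConstant_nonneg hV hd) hA hS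
    (by positivity) (div_le_one_of_le₀ (by linarith) (by positivity))
  rw [fidelityConstant_rpow_one_add hV hd, ← sq, div_pow] at h
  have : 0 ≤ ((d ^ (1 / (d + 1)) + d ^ (-(d / (d + 1)))) ^ ((2 * d + 1) / (d + 1))
      * V ^ ((2 * d + 1) / (d + 1) ^ 2)) * S ^ (d ^ 2 / (d + 1) ^ 2) := by positivity
  linarith

section

variable {α : Type*}

noncomputable def excessZeroOneLoss (η g : α → ℝ) (x : α) : ℝ :=
  if (0 ≤ g x) ↔ (0 ≤ η x - 1 / 2) then 0 else |2 * η x - 1|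

lemma excessZeroOneLoss_nonneg (η g : α → ℝ) (x : α) : 0 ≤ excessZeroOneLoss η g x := by
  unfold excessZeroOneLoss
  split_ifs <;> positivity

lemma excessZeroOneLoss_le_one {η : α → ℝ} {x : α} (hη : η x ∈ Set.Icc (0 : ℝ) 1)
    (g : α → ℝ) : excessZeroOneLoss η g x ≤ 1 := by
  obtain ⟨h0, h1⟩ := hη
  unfold excessZeroOneLoss
  split_ifs
  · exact zero_le_one
  · rw [abs_le]; constructor <;> linarith

lemma excessZeroOneLoss_le_add (η η' g : α → ℝ) (x : α) :
    excessZeroOneLoss η g x ≤ excessZeroOneLoss η' g x + 2 * |η x - η' x| := by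
  unfold excessZeroOneLoss
  by_cases hg : 0 ≤ g x <;> by_cases h : 0 ≤ η x - 1 / 2 <;> by_cases h' : 0 ≤ η' x - 1 / 2 <;>
    simp only [hg, h, h', if_true, if_false, iff_true, iff_false, not_true_eq_false] <;>
    cases abs_cases (2 * η x - 1) <;> cases abs_cases (2 * η' x - 1) <;>
    cases abs_cases (η x - η' x) <;> linarith

lemma abs_excessZeroOneLoss_sub_le (η η' g : α → ℝ) (x : α) :
    |excessZeroOneLoss η g x - excessZeroOneLoss η' g x| ≤ 2 * |η x - η' x| :=
  abs_sub_le_iff.2 ⟨by linarith [excessZeroOneLoss_le_add η η' g x],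
    by linarith [excessZeroOneLoss_le_add η' η g x, abs_sub_comm (η x) (η' x)]⟩

variable [MeasurableSpace α] {μ : Measure α}

lemma measurable_excessZeroOneLoss {η g : α → ℝ} (hη : Measurable η) (hg : Measurable g) :
    Measurable (excessZeroOneLoss η g) :=
  Measurable.ite (by measurability) measurable_const (by fun_prop)

lemma integral_excessZeroOneLoss_mul_nonneg {p : α → ℝ} (hp0 : 0 ≤ᵐ[μ] p) (η g : α → ℝ) :
    0 ≤ ∫ x, excessZeroOneLoss η g x * p x ∂μ :=
  integral_nonneg_of_ae <| hp0.mono fun x hx => mul_nonneg (excessZeroOneLoss_nonneg η g x) hx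

lemma integral_abs_mul_le_sqrt_integral_sq_mul {p u : α → ℝ} (hp0 : 0 ≤ᵐ[μ] p)
    (hp : Integrable p μ) (hp1 : ∫ x, p x ∂μ = 1) (hu : Integrable (fun x => |u x| * p x) μ)
    (hu2 : Integrable (fun x => u x ^ 2 * p x) μ) :
    ∫ x, |u x| * p x ∂μ ≤ √(∫ x, u x ^ 2 * p x ∂μ) := by
  set a := ∫ x, |u x| * p x ∂μ
  have hvar : 0 ≤ ∫ x, (|u x| - a) ^ 2 * p x ∂μ :=
    integral_nonneg_of_ae <| hp0.mono fun x hx => mul_nonneg (sq_nonneg _) hx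
  have hexpand : (fun x => (|u x| - a) ^ 2 * p x)
      = fun x => u x ^ 2 * p x - 2 * a * (|u x| * p x) + a ^ 2 * p x := by
    funext x
    linear_combination p x * sq_abs (u x)
  rw [hexpand, integral_add (f := fun x => u x ^ 2 * p x - 2 * a * (|u x| * p x))
      (hu2.sub (hu.const_mul _)) (hp.const_mul _),
    integral_sub hu2 (hu.const_mul _), integral_const_mul, integral_const_mul, hp1] at hvar
  exact (le_abs_self a).trans (Real.abs_le_sqrt (by linarith))

lemma abs_integral_excessZeroOneLoss_mul_sub_le {p η η' g : α → ℝ} (hp0 : 0 ≤ᵐ[μ] p)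
    (hp : Integrable p μ) (hp1 : ∫ x, p x ∂μ = 1) (hη : Measurable η) (hη' : Measurable η')
    (hg : Measurable g) (hη01 : ∀ᵐ x ∂μ, η x ∈ Set.Icc (0 : ℝ) 1)
    (hη'01 : ∀ᵐ x ∂μ, η' x ∈ Set.Icc (0 : ℝ) 1) :
    |∫ x, excessZeroOneLoss η g x * p x ∂μ - ∫ x, excessZeroOneLoss η' g x * p x ∂μ|
      ≤ 2 * √(∫ x, (η x - η' x) ^ 2 * p x ∂μ) := by
  have hu1 : ∀ᵐ x ∂μ, |η x - η' x| ≤ 1 := by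
    filter_upwards [hη01, hη'01] with x ⟨h0, h1⟩ ⟨h0', h1'⟩
    rw [abs_le]; constructor <;> linarith
  have hℓ : ∀ e, Measurable e → (∀ᵐ x ∂μ, e x ∈ Set.Icc (0 : ℝ) 1) →
      Integrable (fun x => excessZeroOneLoss e g x * p x) μ := fun e he he01 =>
    hp.bdd_mul (measurable_excessZeroOneLoss he hg).aestronglyMeasurable
      (he01.mono fun x hx => by
        rw [Real.norm_eq_abs, abs_of_nonneg (excessZeroOneLoss_nonneg e g x)]
        exact excessZeroOneLoss_le_one hx g)
  have hu : Integrable (fun x => |η x - η' x| * p x) μ :=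
    hp.bdd_mul (by fun_prop) (hu1.mono fun x hx => by rwa [Real.norm_eq_abs, abs_abs])
  have hu2 : Integrable (fun x => (η x - η' x) ^ 2 * p x) μ :=
    hp.bdd_mul (by fun_prop) (hu1.mono fun x hx => by
      rw [Real.norm_eq_abs, abs_pow]; exact pow_le_one₀ (abs_nonneg _) hx)
  calc |∫ x, excessZeroOneLoss η g x * p x ∂μ - ∫ x, excessZeroOneLoss η' g x * p x ∂μ|
      = |∫ x, excessZeroOneLoss η g x * p x - excessZeroOneLoss η' g x * p x ∂μ| := by
        rw [integral_sub (hℓ η hη hη01) (hℓ η' hη' hη'01)]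
    _ ≤ ∫ x, |excessZeroOneLoss η g x * p x - excessZeroOneLoss η' g x * p x| ∂μ :=
        abs_integral_le_integral_abs
    _ ≤ ∫ x, 2 * (|η x - η' x| * p x) ∂μ := by
        refine integral_mono_ae ((hℓ η hη hη01).sub (hℓ η' hη' hη'01)).abs (hu.const_mul 2) ?_
        filter_upwards [hp0] with x hx
        rw [← sub_mul, abs_mul, abs_of_nonneg hx, ← mul_assoc]
        exact mul_le_mul_of_nonneg_right (abs_excessZeroOneLoss_sub_le η η' g x) hx
    _ ≤ 2 * √(∫ x, (η x - η' x) ^ 2 * p x ∂μ) := by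
        rw [integral_const_mul]
        gcongr
        exact integral_abs_mul_le_sqrt_integral_sq_mul hp0 hp hp1 hu hu2

lemma integral_mul_le_setIntegral_add {p q f : α → ℝ} (hp : Integrable p μ)
    (hq : Integrable q μ) (hpm : Measurable p) (hqm : Measurable q) (hq0 : 0 ≤ᵐ[μ] q)
    (hf : AEStronglyMeasurable f μ) (hf01 : ∀ᵐ x ∂μ, f x ∈ Set.Icc (0 : ℝ) 1) {C : ℝ}
    (hC : 0 ≤ C) :
    ∫ x, f x * p x ∂μ ≤ ∫ x in {x | C * q x ≤ p x}, p x ∂μ + C * ∫ x, f x * q x ∂μ := by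
  have hE : MeasurableSet {x | C * q x ≤ p x} := measurableSet_le (hqm.const_mul C) hpm
  have hf1 : ∀ᵐ x ∂μ, ‖f x‖ ≤ 1 :=
    hf01.mono fun x ⟨h0, h1⟩ => by rwa [Real.norm_eq_abs, abs_of_nonneg h0]
  have hfq : Integrable (fun x => f x * q x) μ := hq.bdd_mul hf hf1
  calc ∫ x, f x * p x ∂μ
      ≤ ∫ x, ({x | C * q x ≤ p x}.indicator p x + C * (f x * q x)) ∂μ := by
        refine integral_mono_ae (hp.bdd_mul hf hf1) ((hp.indicator hE).add (hfq.const_mul C)) ?_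
        filter_upwards [hq0, hf01] with x hqx ⟨hf0, hf1⟩
        by_cases hx : C * q x ≤ p x
        · rw [Set.indicator_of_mem (s := {x | C * q x ≤ p x}) hx]
          nlinarith [mul_nonneg hC hqx, mul_nonneg hf0 hqx]
        · rw [Set.indicator_of_notMem (s := {x | C * q x ≤ p x}) hx]
          nlinarith
    _ = ∫ x in {x | C * q x ≤ p x}, p x ∂μ + C * ∫ x, f x * q x ∂μ := by
        rw [integral_add (hp.indicator hE) (hfq.const_mul C), integral_indicator hE,
          integral_const_mul]

lemma integral_mul_le_fidelityConstant_mul_rpow {p q f : α → ℝ} {V d : ℝ} (hd : 0 < d)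
    (hV : 0 ≤ V) (hp : Integrable p μ) (hq : Integrable q μ) (hpm : Measurable p)
    (hqm : Measurable q) (hq0 : 0 ≤ᵐ[μ] q) (hf : AEStronglyMeasurable f μ)
    (hf01 : ∀ᵐ x ∂μ, f x ∈ Set.Icc (0 : ℝ) 1)
    (hfid : ∀ C : ℝ, 0 < C → ∫ x in {x | C * q x ≤ p x}, p x ∂μ ≤ V * C ^ (-d)) :
    ∫ x, f x * p x ∂μ ≤ fidelityConstant V d * (∫ x, f x * q x ∂μ) ^ (d / (d + 1)) := by
  refine le_fidelityConstant_mul_rpow hd hV ?_ fun C hC => ?_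
  · exact integral_nonneg_of_ae <| (hf01.and hq0).mono fun x hx => mul_nonneg hx.1.1 hx.2
  · grw [integral_mul_le_setIntegral_add hp hq hpm hqm hq0 hf hf01 hC.le, hfid C hC]

lemma restrict_sep_eq_restrict_restrict {s : Set α} (hs : MeasurableSet s) (P : α → Prop) :
    μ.restrict {x ∈ s | P x} = (μ.restrict s).restrict {x | P x} := by
  rw [Measure.restrict_restrict' hs, Set.inter_comm]
  rfl

lemma setIntegral_excessZeroOneLoss_mul_le {s : Set α} (hs : MeasurableSet s) {p q η g : α → ℝ}
    {V d : ℝ} (hd : 0 < d) (hV : 0 ≤ V) (hp : IntegrableOn p s μ) (hq : IntegrableOn q s μ)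
    (hpm : Measurable p) (hqm : Measurable q) (hq0 : ∀ x ∈ s, 0 ≤ q x) (hη : Measurable η)
    (hg : Measurable g) (hη01 : ∀ x ∈ s, η x ∈ Set.Icc (0 : ℝ) 1)
    (hfid : ∀ C : ℝ, 0 < C → ∫ x in {x ∈ s | C * q x ≤ p x}, p x ∂μ ≤ V * C ^ (-d)) :
    ∫ x in s, excessZeroOneLoss η g x * p x ∂μ ≤
      fidelityConstant V d * (∫ x in s, excessZeroOneLoss η g x * q x ∂μ) ^ (d / (d + 1)) := by
  refine integral_mul_le_fidelityConstant_mul_rpow hd hV hp hq hpm hqm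
    (ae_restrict_of_forall_mem hs hq0) (measurable_excessZeroOneLoss hη hg).aestronglyMeasurable
    (ae_restrict_of_forall_mem hs fun x hx =>
      ⟨excessZeroOneLoss_nonneg η g x, excessZeroOneLoss_le_one (hη01 x hx) g⟩) fun C hC => ?_
  simpa only [restrict_sep_eq_restrict_restrict hs] using hfid C hC

end

theorem stmt13_general
    {k : ℕ} (𝒳 : Set (Fin k → ℝ)) (h𝒳 : MeasurableSet 𝒳)
    (pX pXt : (Fin k → ℝ) → ℝ)
    (hpX_meas : Measurable pX) (hpXt_meas : Measurable pXt)
    (hpX_nonneg : ∀ x ∈ 𝒳, 0 ≤ pX x) (hpXt_nonneg : ∀ x ∈ 𝒳, 0 ≤ pXt x)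
    (hpX_int : IntegrableOn pX 𝒳) (hpXt_int : IntegrableOn pXt 𝒳)
    (hpX_one : (∫ x in 𝒳, pX x) = 1)
    (V d : ℝ) (hV : 0 ≤ V) (hd : 0 < d)
    -- (V, d)-fidelity level
    (hfid : ∀ C : ℝ, 0 < C →
      (∫ x in {x ∈ 𝒳 | C * pXt x ≤ pX x}, pX x) ≤ V * C ^ (-d) ∧
      (∫ x in {x ∈ 𝒳 | C * pX x ≤ pXt x}, pXt x) ≤ V * C ^ (-d))
    (η ηhat : (Fin k → ℝ) → ℝ)
    (hη : Measurable η) (hηhat : Measurable ηhat)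
    (hη01 : ∀ x ∈ 𝒳, η x ∈ Set.Icc (0 : ℝ) 1) (hηhat01 : ∀ x ∈ 𝒳, ηhat x ∈ Set.Icc (0 : ℝ) 1)
    -- excess risks
    (Φ01 Φt01 : ((Fin k → ℝ) → ℝ) → ℝ)
    (hΦ01 : ∀ g, Φ01 g =
      ∫ x in 𝒳, (if (0 ≤ g x) ↔ (0 ≤ η x - 1 / 2) then (0 : ℝ) else |2 * η x - 1|) * pX x)
    (hΦt01 : ∀ g, Φt01 g =
      ∫ x in 𝒳, (if (0 ≤ g x) ↔ (0 ≤ ηhat x - 1 / 2) then (0 : ℝ) else |2 * ηhat x - 1|) * pXt x)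
    (G2 : Set ((Fin k → ℝ) → ℝ)) (hG2 : ∀ g ∈ G2, Measurable g)
    (gstar gtstar : (Fin k → ℝ) → ℝ)
    (hgstar : gstar ∈ G2) (hgtstar : gtstar ∈ G2)
    (hgtstar_min : ∀ g ∈ G2, Φt01 gtstar ≤ Φt01 g) :
    Φ01 gtstar ≤
      ((d ^ (1 / (d + 1)) + d ^ (-(d / (d + 1)))) ^ ((2 * d + 1) / (d + 1))
          * V ^ ((2 * d + 1) / (d + 1) ^ 2)) * Φ01 gstar ^ (d ^ 2 / (d + 1) ^ 2)
        + 4 * ((d ^ (1 / (d + 1)) + d ^ (-(d / (d + 1)))) ^ ((2 * d + 1) / (d + 1))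
            * V ^ ((2 * d + 1) / (d + 1) ^ 2))
          * Real.sqrt (∫ x in 𝒳, (ηhat x - η x) ^ 2 * pX x) ^ (d ^ 2 / (d + 1) ^ 2)
        + 4 * Real.sqrt (∫ x in 𝒳, (ηhat x - η x) ^ 2 * pX x) := by
  have hpX0 : 0 ≤ᵐ[volume.restrict 𝒳] pX := ae_restrict_of_forall_mem h𝒳 hpX_nonneg
  set K := fidelityConstant V d
  set r := d / (d + 1)
  set S := √(∫ x in 𝒳, (ηhat x - η x) ^ 2 * pX x)
  set Φhat : ((Fin k → ℝ) → ℝ) → ℝ := fun g => ∫ x in 𝒳, excessZeroOneLoss ηhat g x * pX x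
  have hΦhat : ∀ g ∈ G2, |Φhat g - Φ01 g| ≤ 2 * S := fun g hg => by
    rw [hΦ01]
    exact abs_integral_excessZeroOneLoss_mul_sub_le hpX0 hpX_int hpX_one hηhat hη (hG2 g hg)
      (ae_restrict_of_forall_mem h𝒳 hηhat01) (ae_restrict_of_forall_mem h𝒳 hη01)
  have hΦhat_le : ∀ g ∈ G2, Φhat g ≤ K * Φt01 g ^ r := fun g hg => hΦt01 g ▸
    setIntegral_excessZeroOneLoss_mul_le h𝒳 hd hV hpX_int hpXt_int hpX_meas hpXt_meas
      hpXt_nonneg hηhat (hG2 g hg) hηhat01 fun C hC => (hfid C hC).1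
  have hΦt_le : ∀ g ∈ G2, Φt01 g ≤ K * Φhat g ^ r := fun g hg => hΦt01 g ▸
    setIntegral_excessZeroOneLoss_mul_le h𝒳 hd hV hpXt_int hpX_int hpXt_meas hpX_meas
      hpX_nonneg hηhat (hG2 g hg) hηhat01 fun C hC => (hfid C hC).2
  have hK : 0 ≤ K := fidelityConstant_nonneg hV hd.le
  have hΦt0 : ∀ g, 0 ≤ Φt01 g := fun g => hΦt01 g ▸
    integral_excessZeroOneLoss_mul_nonneg (ae_restrict_of_forall_mem h𝒳 hpXt_nonneg) ηhat g
  have hΦhat0 : 0 ≤ Φhat gstar := integral_excessZeroOneLoss_mul_nonneg hpX0 ηhat _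
  calc Φ01 gtstar ≤ Φhat gtstar + 2 * S := by linarith [abs_le.1 (hΦhat gtstar hgtstar)]
    _ ≤ K * Φt01 gtstar ^ r + 2 * S := by grw [hΦhat_le gtstar hgtstar]
    _ ≤ K * Φt01 gstar ^ r + 2 * S := by
      gcongr
      exacts [hΦt0 gtstar, hgtstar_min gstar hgstar]
    _ ≤ K * (K * Φhat gstar ^ r) ^ r + 2 * S := by
      gcongr
      exacts [hΦt0 gstar, hΦt_le gstar hgstar]
    _ ≤ K * (K * (Φ01 gstar + 2 * S) ^ r) ^ r + 2 * S := by
      grw [show Φhat gstar ≤ Φ01 gstar + 2 * S by linarith [abs_le.1 (hΦhat gstar hgstar)]]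
    _ ≤ _ := fidelityConstant_mul_mul_rpow_add_le hV hd.le
      (hΦ01 gstar ▸ integral_excessZeroOneLoss_mul_nonneg hpX0 η _) (Real.sqrt_nonneg _)

/-- **Excess-risk bound for the synthetic classification minimizer** (key inequality
in the proof of Theorem 4, classification part).  `sign(t) = 1` when `t ≥ 0` and `−1`
otherwise; `Φ_{0-1}(g) = ∫ 1{sign(g) ≠ sign(η − 1/2)} |2η − 1| p_X` and
`Φ̃_{0-1}(g) = ∫ 1{sign(g) ≠ sign(η̂ − 1/2)} |2η̂ − 1| p_X̃`.  `gstar` minimizes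
`Φ_{0-1}` over `G₂` and `gtstar` minimizes `Φ̃_{0-1}` over `G₂`. -/
theorem stmt13
    {k : ℕ} (𝒳 : Set (Fin k → ℝ)) (h𝒳 : MeasurableSet 𝒳)
    (pX pXt : (Fin k → ℝ) → ℝ)
    (hpX_meas : Measurable pX) (hpXt_meas : Measurable pXt)
    (hpX_nonneg : ∀ x ∈ 𝒳, 0 ≤ pX x) (hpXt_nonneg : ∀ x ∈ 𝒳, 0 ≤ pXt x)
    (hpX_int : IntegrableOn pX 𝒳) (hpXt_int : IntegrableOn pXt 𝒳)
    (hpX_one : (∫ x in 𝒳, pX x) = 1) (hpXt_one : (∫ x in 𝒳, pXt x) = 1)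
    (V d : ℝ) (hV : 0 ≤ V) (hd : 0 < d)
    -- (V, d)-fidelity level
    (hfid : ∀ C : ℝ, 0 < C →
      (∫ x in {x ∈ 𝒳 | C * pXt x ≤ pX x}, pX x) ≤ V * C ^ (-d) ∧
      (∫ x in {x ∈ 𝒳 | C * pX x ≤ pXt x}, pXt x) ≤ V * C ^ (-d))
    (η ηhat : (Fin k → ℝ) → ℝ)
    (hη : Measurable η) (hηhat : Measurable ηhat)
    (hη01 : ∀ x ∈ 𝒳, η x ∈ Set.Icc (0 : ℝ) 1) (hηhat01 : ∀ x ∈ 𝒳, ηhat x ∈ Set.Icc (0 : ℝ) 1)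
    -- excess risks
    (Φ01 Φt01 : ((Fin k → ℝ) → ℝ) → ℝ)
    (hΦ01 : ∀ g, Φ01 g =
      ∫ x in 𝒳, (if (0 ≤ g x) ↔ (0 ≤ η x - 1 / 2) then (0 : ℝ) else |2 * η x - 1|) * pX x)
    (hΦt01 : ∀ g, Φt01 g =
      ∫ x in 𝒳, (if (0 ≤ g x) ↔ (0 ≤ ηhat x - 1 / 2) then (0 : ℝ) else |2 * ηhat x - 1|) * pXt x)
    (G2 : Set ((Fin k → ℝ) → ℝ)) (hG2 : ∀ g ∈ G2, Measurable g)
    (gstar gtstar : (Fin k → ℝ) → ℝ)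
    (hgstar : gstar ∈ G2) (hgtstar : gtstar ∈ G2)
    (hgstar_min : ∀ g ∈ G2, Φ01 gstar ≤ Φ01 g)
    (hgtstar_min : ∀ g ∈ G2, Φt01 gtstar ≤ Φt01 g) :
    Φ01 gtstar ≤
      ((d ^ (1 / (d + 1)) + d ^ (-(d / (d + 1)))) ^ ((2 * d + 1) / (d + 1))
          * V ^ ((2 * d + 1) / (d + 1) ^ 2)) * Φ01 gstar ^ (d ^ 2 / (d + 1) ^ 2)
        + 4 * ((d ^ (1 / (d + 1)) + d ^ (-(d / (d + 1)))) ^ ((2 * d + 1) / (d + 1))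
            * V ^ ((2 * d + 1) / (d + 1) ^ 2))
          * Real.sqrt (∫ x in 𝒳, (ηhat x - η x) ^ 2 * pX x) ^ (d ^ 2 / (d + 1) ^ 2)
        + 4 * Real.sqrt (∫ x in 𝒳, (ηhat x - η x) ^ 2 * pX x) :=
  stmt13_general 𝒳 h𝒳 pX pXt hpX_meas hpXt_meas hpX_nonneg hpXt_nonneg hpX_int hpXt_int hpX_one V d
    hV hd hfid η ηhat hη hηhat hη01 hηhat01 Φ01 Φt01 hΦ01 hΦt01 G2 hG2 gstar gtstar hgstar hgtstar
    hgtstar_min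
end
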